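/- arXiv:2202.03892 — 8 statements merged into one kernel-verified Lean document; each statement's English description precedes it below -/
import Mathlib

section
/- Let M ≥ 1 and n₁,…,n_M ≥ 2 be integers, let S = ∏_{j=1}^M {1,…,n_j} be the set of strata, and let C be a real S×S matrix whose entry C(z,z′) depends only on the agreement set I(z,z′) = {j : z_j = z′_j}, say C(z,z′) = c_{I(z,z′)} for a family of reals (c_I)_{I⊆{1,…,M}}. Then C is diagonalizable over ℝ and its characteristic polynomial equals ∏_{J⊆{1,…,M}} (X − λ_J)^{m_J}, where λ_J = ∑_{I⊆{1,…,M}} (−1)^{|Iᶜ∩Jᶜ|} c_I ∏_{k∈J∩Iᶜ} (n_k − 1) and m_J = ∏_{j∈Jᶜ} (n_j − 1) (complements taken in {1,…,M}, empty products equal 1). In particular, the complete multiset of eigenvalues of C is {λ_J with multiplicity m_J : J ⊆ {1,…,M}}. -/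
open Finset Polynomial

namespace FSaux

/-! ### Per-factor matrices

`Qm m` is the change-of-basis matrix whose column `0` is the all-ones vector and whose
column `k ≠ 0` is `e₀ - e_k`; `Rm m` is its explicit inverse. -/

def Qm (m : ℕ) [NeZero m] : Matrix (Fin m) (Fin m) ℝ :=
  Matrix.of fun i k => if k = 0 then 1 else if i = 0 then 1 else if i = k then -1 else 0

noncomputable def Rm (m : ℕ) [NeZero m] : Matrix (Fin m) (Fin m) ℝ :=
  Matrix.of fun i j => (m : ℝ)⁻¹ - if i = j ∧ i ≠ 0 then 1 else 0

lemma Qm_apply_zero (m : ℕ) [NeZero m] (i : Fin m) : Qm m i 0 = 1 := by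
  simp [Qm]

lemma Qm_zero_apply (m : ℕ) [NeZero m] (k : Fin m) : Qm m 0 k = 1 := by
  simp [Qm, ite_self]

lemma Qm_decomp (m : ℕ) [NeZero m] (i k : Fin m) (hi : i ≠ 0) :
    Qm m i k = (if k = 0 then 1 else 0) + (if k = i then -1 else 0) := by
  simp only [Qm, Matrix.of_apply]
  by_cases hk : k = 0
  · subst hk; simp [Ne.symm hi]
  · by_cases hik : k = i
    · subst hik; simp [hk, hi]
    · simp [hk, hi, Ne.symm hik, hik]

lemma Rm_decomp (m : ℕ) [NeZero m] (i j : Fin m) (hi : i ≠ 0) :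
    Rm m i j = (m : ℝ)⁻¹ - (if i = j then 1 else 0) := by
  simp only [Rm, Matrix.of_apply]
  by_cases h : i = j
  · simp [h, hi, h ▸ hi]
  · simp [h]

lemma sum_Rm_col (m : ℕ) [NeZero m] (j : Fin m) :
    ∑ k, Rm m k j = if j = 0 then 1 else 0 := by
  have hm : (m : ℝ) ≠ 0 := Nat.cast_ne_zero.2 (NeZero.ne m)
  simp only [Rm, Matrix.of_apply]
  rw [Finset.sum_sub_distrib, Finset.sum_const, card_univ, Fintype.card_fin,
    nsmul_eq_mul, mul_inv_cancel₀ hm]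
  by_cases hj : j = 0
  · subst hj; simp
  · have : ∀ k : Fin m, (if k = j ∧ k ≠ 0 then (1:ℝ) else 0) = (if k = j then 1 else 0) := by
      intro k
      by_cases h : k = j
      · subst h; simp [hj]
      · simp [h]
    rw [Finset.sum_congr rfl fun k _ => this k, Finset.sum_ite_eq' univ j fun _ => (1:ℝ)]
    simp [hj]

lemma sum_Qm_col (m : ℕ) [NeZero m] (j : Fin m) :
    ∑ k, Qm m k j = if j = 0 then (m : ℝ) else 0 := by
  by_cases hj : j = 0
  · subst hj
    simp [Qm_apply_zero, Finset.sum_const, card_univ]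
  · have : ∀ k : Fin m, Qm m k j = (if k = 0 then 1 else 0) + (if k = j then -1 else 0) := by
      intro k
      by_cases hk : k = 0
      · subst hk; simp [Qm_zero_apply, Ne.symm hj]
      · rw [Qm_decomp m k j hk]
        by_cases h : j = k
        · subst h; simp [hj]
        · simp [hj, h, hk, Ne.symm h]
    rw [Finset.sum_congr rfl fun k _ => this k, Finset.sum_add_distrib,
      Finset.sum_ite_eq' univ (0 : Fin m) fun _ => (1:ℝ),
      Finset.sum_ite_eq' univ j fun _ => (-1:ℝ)]
    simp [hj]

lemma Qm_mul_Rm (m : ℕ) [NeZero m] : Qm m * Rm m = 1 := by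
  ext i j
  rw [Matrix.mul_apply, Matrix.one_apply]
  by_cases hi : i = 0
  · subst hi
    simp only [Qm_zero_apply, one_mul]
    rw [sum_Rm_col]
    by_cases hj : j = 0
    · subst hj; simp
    · simp [hj, Ne.symm hj]
  · rw [Finset.sum_congr rfl fun k _ => by rw [Qm_decomp m i k hi]]
    simp only [add_mul, Finset.sum_add_distrib, ite_mul, one_mul, zero_mul, neg_mul]
    rw [Finset.sum_ite_eq' univ (0 : Fin m) (fun k => Rm m k j),
      Finset.sum_ite_eq' univ i (fun k => -(Rm m k j))]
    simp only [mem_univ, if_true]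
    rw [Rm_decomp m i j hi]
    simp only [Rm, Matrix.of_apply]
    by_cases hij : i = j
    · subst hij; simp
    · simp [hij]

lemma Rm_mul_Qm (m : ℕ) [NeZero m] : Rm m * Qm m = 1 := by
  have hm : (m : ℝ) ≠ 0 := Nat.cast_ne_zero.2 (NeZero.ne m)
  ext i j
  rw [Matrix.mul_apply, Matrix.one_apply]
  by_cases hi : i = 0
  · subst hi
    rw [Finset.sum_congr rfl fun k _ => by
      rw [show Rm m (0:Fin m) k = (m:ℝ)⁻¹ by simp [Rm]]]
    rw [← Finset.mul_sum, sum_Qm_col]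
    by_cases hj : j = 0
    · subst hj; simp [inv_mul_cancel₀ hm]
    · simp [hj, Ne.symm hj]
  · rw [Finset.sum_congr rfl fun k _ => by rw [Rm_decomp m i k hi]]
    simp only [sub_mul, Finset.sum_sub_distrib, ite_mul, one_mul, zero_mul]
    rw [← Finset.mul_sum, sum_Qm_col, Finset.sum_ite_eq univ i (fun k => Qm m k j)]
    simp only [mem_univ, if_true]
    by_cases hj : j = 0
    · subst hj
      simp [Qm_apply_zero, inv_mul_cancel₀ hm, hi]
    · rw [Qm_decomp m i j hi]
      by_cases hij : i = j
      · subst hij; simp [hj]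
      · simp [hj, hij, Ne.symm hij, fun h : j = i => hij h.symm]

/-- "Agreement" indicator matrix for a factor: if `p` holds it is the identity,
otherwise the all-ones-off-diagonal matrix. -/
def Bm (m : ℕ) (p : Prop) [Decidable p] : Matrix (Fin m) (Fin m) ℝ :=
  Matrix.of fun a b => if p ↔ a = b then 1 else 0

lemma Bm_mul_Qm (m : ℕ) [NeZero m] (p : Prop) [Decidable p] (a b : Fin m) :
    (Bm m p * Qm m) a b
      = (if p then 1 else if b = 0 then (m : ℝ) - 1 else -1) * Qm m a b := by
  rw [Matrix.mul_apply]
  by_cases hp : p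
  · have : ∀ k : Fin m, Bm m p a k = if a = k then 1 else 0 := by
      intro k; simp [Bm, hp]
    rw [Finset.sum_congr rfl fun k _ => by rw [this k]]
    simp only [ite_mul, one_mul, zero_mul, Finset.sum_ite_eq univ a (fun k => Qm m k b),
      mem_univ, if_true, hp]
  · have : ∀ k : Fin m, Bm m p a k = 1 - (if a = k then 1 else 0) := by
      intro k
      by_cases h : a = k
      · simp [Bm, hp, h]
      · simp [Bm, hp, h]
    rw [Finset.sum_congr rfl fun k _ => by rw [this k]]
    simp only [sub_mul, one_mul, ite_mul, zero_mul, Finset.sum_sub_distrib,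
      Finset.sum_ite_eq univ a (fun k => Qm m k b), mem_univ, if_true, sum_Qm_col, hp, if_false]
    by_cases hb : b = 0
    · subst hb
      simp only [Qm_apply_zero, eq_self_iff_true, if_true, mul_one]
    · simp only [hb, if_false]
      ring

/-! ### Tensor-level constructions -/

section Tensor

variable {M : ℕ} (n : Fin M → ℕ) [∀ j, NeZero (n j)]

noncomputable def Pm : Matrix (∀ j, Fin (n j)) (∀ j, Fin (n j)) ℝ :=
  Matrix.of fun z w => ∏ j, Qm (n j) (z j) (w j)

noncomputable def Pinv : Matrix (∀ j, Fin (n j)) (∀ j, Fin (n j)) ℝ :=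
  Matrix.of fun z w => ∏ j, Rm (n j) (z j) (w j)

omit [∀ j, NeZero (n j)] in
lemma tensor_mul_apply (F G : ∀ j, Matrix (Fin (n j)) (Fin (n j)) ℝ)
    (z w : ∀ j, Fin (n j)) :
    ∑ u : ∀ j, Fin (n j), (∏ j, F j (z j) (u j)) * ∏ j, G j (u j) (w j)
      = ∏ j, (F j * G j) (z j) (w j) := by
  simp only [Matrix.mul_apply]
  rw [Finset.prod_univ_sum (fun j => (univ : Finset (Fin (n j))))
    (fun j k => F j (z j) k * G j k (w j)), Fintype.piFinset_univ]
  exact Finset.sum_congr rfl fun u _ => Finset.prod_mul_distrib.symm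

lemma Pm_mul_Pinv : Pm n * Pinv n = 1 := by
  ext z w
  rw [Matrix.mul_apply, Matrix.one_apply]
  simp only [Pm, Pinv, Matrix.of_apply]
  rw [tensor_mul_apply n (fun j => Qm (n j)) (fun j => Rm (n j)) z w]
  rw [Finset.prod_congr rfl fun j _ => by rw [Qm_mul_Rm (n j)]]
  simp only [Matrix.one_apply]
  rw [Finset.prod_boole]
  simp [funext_iff]

lemma Pinv_mul_Pm : Pinv n * Pm n = 1 := by
  ext z w
  rw [Matrix.mul_apply, Matrix.one_apply]
  simp only [Pm, Pinv, Matrix.of_apply]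
  rw [tensor_mul_apply n (fun j => Rm (n j)) (fun j => Qm (n j)) z w]
  rw [Finset.prod_congr rfl fun j _ => by rw [Rm_mul_Qm (n j)]]
  simp only [Matrix.one_apply]
  rw [Finset.prod_boole]
  simp [funext_iff]

omit [∀ j, NeZero (n j)] in
/-- The indicator decomposition of a factor-symmetric matrix entry. -/
lemma entry_decomp (c : Finset (Fin M) → ℝ) (z z' : ∀ j, Fin (n j)) :
    c (univ.filter fun j => z j = z' j)
      = ∑ I : Finset (Fin M), c I * ∏ j, Bm (n j) (j ∈ I) (z j) (z' j) := by
  have h : ∀ I : Finset (Fin M),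
      (∏ j, Bm (n j) (j ∈ I) (z j) (z' j))
        = if I = univ.filter (fun j => z j = z' j) then 1 else 0 := by
    intro I
    simp only [Bm, Matrix.of_apply]
    rw [Finset.prod_boole]
    congr 1
    simp only [eq_iff_iff, Finset.ext_iff, mem_filter, mem_univ, true_and]
    exact ⟨fun h j => h j trivial, fun h j _ => h j⟩
  rw [Finset.sum_congr rfl fun I _ => by rw [h I]]
  simp only [mul_ite, mul_one, mul_zero]
  rw [Finset.sum_ite_eq' univ (univ.filter fun j => z j = z' j) c]
  simp

/-- Eigenvalue function (indexed by strata). -/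
noncomputable def dvec (c : Finset (Fin M) → ℝ) : (∀ j, Fin (n j)) → ℝ :=
  fun w => ∑ I : Finset (Fin M),
    c I * ∏ j, (if j ∈ I then 1 else if w j = 0 then (n j : ℝ) - 1 else -1)

lemma A_mul_Pm (c : Finset (Fin M) → ℝ)
    (A : Matrix (∀ j, Fin (n j)) (∀ j, Fin (n j)) ℝ)
    (hA : ∀ z z' : ∀ j, Fin (n j),
      A z z' = c (Finset.univ.filter fun j => z j = z' j)) :
    A * Pm n = Pm n * Matrix.diagonal (dvec n c) := by
  ext z w
  rw [Matrix.mul_apply, Matrix.mul_diagonal]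
  calc ∑ u, A z u * Pm n u w
      = ∑ u : ∀ j, Fin (n j), ∑ I : Finset (Fin M),
          c I * ((∏ j, Bm (n j) (j ∈ I) (z j) (u j)) * ∏ j, Qm (n j) (u j) (w j)) := by
        refine Finset.sum_congr rfl fun u _ => ?_
        rw [hA z u, entry_decomp n c z u, Finset.sum_mul]
        exact Finset.sum_congr rfl fun I _ => by
          simp only [Pm, Matrix.of_apply, mul_assoc]
    _ = ∑ I : Finset (Fin M),
          c I * ∑ u : ∀ j, Fin (n j),
            (∏ j, Bm (n j) (j ∈ I) (z j) (u j)) * ∏ j, Qm (n j) (u j) (w j) := by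
        rw [Finset.sum_comm]
        exact Finset.sum_congr rfl fun I _ => (Finset.mul_sum _ _ _).symm
    _ = ∑ I : Finset (Fin M),
          c I * ∏ j, (Bm (n j) (j ∈ I) * Qm (n j)) (z j) (w j) := by
        refine Finset.sum_congr rfl fun I _ => ?_
        rw [tensor_mul_apply n (fun j => Bm (n j) (j ∈ I)) (fun j => Qm (n j)) z w]
    _ = ∑ I : Finset (Fin M),
          c I * ((∏ j, (if j ∈ I then 1 else if w j = 0 then (n j : ℝ) - 1 else -1)) *
            ∏ j, Qm (n j) (z j) (w j)) := by
        refine Finset.sum_congr rfl fun I _ => ?_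
        rw [Finset.prod_congr rfl fun j _ => Bm_mul_Qm (n j) (j ∈ I) (z j) (w j),
          Finset.prod_mul_distrib]
    _ = Pm n z w * dvec n c w := by
        unfold dvec
        rw [Finset.mul_sum]
        refine Finset.sum_congr rfl fun I _ => ?_
        simp only [Pm, Matrix.of_apply]
        ring

/-! ### Characteristic polynomial lemmas -/

lemma charpoly_similar {N : Type*} [DecidableEq N] [Fintype N]
    (P Pi D : Matrix N N ℝ) (h1 : P * Pi = 1) :
    (P * D * Pi).charpoly = D.charpoly := by
  have hmap1 : P.map (C : ℝ → ℝ[X]) * Pi.map C = 1 := by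
    rw [← Matrix.map_mul, h1]
    simp [Matrix.map_one]
  have hcomm : ∀ B : Matrix N N ℝ[X], Matrix.scalar N (X : ℝ[X]) * B = B * Matrix.scalar N X :=
    fun B => (Matrix.scalar_commute (X : ℝ[X]) (fun r' => Commute.all _ _) B).eq
  have key : (P * D * Pi).charmatrix = P.map C * D.charmatrix * Pi.map C := by
    unfold Matrix.charmatrix
    simp only [RingHom.mapMatrix_apply]
    rw [Matrix.mul_sub, Matrix.sub_mul]
    congr 1
    · rw [Matrix.mul_assoc (P.map C), hcomm (Pi.map C), ← Matrix.mul_assoc,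
        hmap1, Matrix.one_mul]
    · rw [Matrix.map_mul, Matrix.map_mul]
  rw [Matrix.charpoly, key, Matrix.det_mul, Matrix.det_mul, Matrix.charpoly]
  have : (P.map (C : ℝ → ℝ[X])).det * (Pi.map C).det = 1 := by
    rw [← Matrix.det_mul, hmap1, Matrix.det_one]
  calc (P.map C).det * D.charmatrix.det * (Pi.map C).det
      = D.charmatrix.det * ((P.map C).det * (Pi.map C).det) := by ring
    _ = D.charmatrix.det := by rw [this, mul_one]

lemma charpoly_diag {N : Type*} [DecidableEq N] [Fintype N] (d : N → ℝ) :
    (Matrix.diagonal d).charpoly = ∏ i, (X - C (d i)) := by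
  have : (Matrix.diagonal d).charmatrix = Matrix.diagonal (fun i => X - C (d i)) := by
    ext i j
    by_cases h : i = j
    · subst h
      rw [Matrix.charmatrix_apply_eq, Matrix.diagonal_apply_eq, Matrix.diagonal_apply_eq]
    · rw [Matrix.charmatrix_apply_ne _ _ _ h, Matrix.diagonal_apply_ne _ h,
        Matrix.diagonal_apply_ne _ h]
      simp
  rw [Matrix.charpoly, this, Matrix.det_diagonal]

/-! ### Identification of the eigenvalues and multiplicities -/

lemma dvec_eq (c : Finset (Fin M) → ℝ) (w : ∀ j, Fin (n j)) :
    dvec n c w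
      = ∑ I : Finset (Fin M),
          (-1 : ℝ) ^ (Iᶜ ∩ (univ.filter fun j => w j = 0)ᶜ).card * c I *
            ∏ k ∈ (univ.filter fun j => w j = 0) ∩ Iᶜ, ((n k : ℝ) - 1) := by
  set J : Finset (Fin M) := univ.filter fun j => w j = 0 with hJ
  have hmem : ∀ j, (j ∈ J ↔ w j = 0) := by
    intro j; simp [hJ]
  unfold dvec
  refine Finset.sum_congr rfl fun I _ => ?_
  have step1 : (∏ j, (if j ∈ I then (1:ℝ) else if w j = 0 then (n j : ℝ) - 1 else -1))
      = ∏ j ∈ Iᶜ, (if w j = 0 then (n j : ℝ) - 1 else -1) := by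
    rw [← Finset.prod_compl_mul_prod I
      (f := fun j => if j ∈ I then (1:ℝ) else if w j = 0 then (n j : ℝ) - 1 else -1)]
    rw [Finset.prod_congr rfl (fun j hj => by
        rw [if_neg (Finset.mem_compl.mp hj)]),
      Finset.prod_congr (rfl : I = I) (fun j hj => by rw [if_pos hj]),
      Finset.prod_const_one, mul_one]
  rw [step1]
  have step2 : (∏ j ∈ Iᶜ, (if w j = 0 then (n j : ℝ) - 1 else -1))
      = (∏ j ∈ Iᶜ ∩ J, ((n j : ℝ) - 1)) * (-1 : ℝ) ^ (Iᶜ ∩ Jᶜ).card := by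
    rw [Finset.prod_congr rfl (fun j _ => by
        rw [show (if w j = 0 then ((n j : ℝ) - 1) else -1)
            = (if j ∈ J then ((n j : ℝ) - 1) else -1) by
          by_cases h : w j = 0 <;> simp [h, (hmem j)]])]
    rw [Finset.prod_ite]
    have e1 : Iᶜ.filter (fun j => j ∈ J) = Iᶜ ∩ J := Finset.filter_mem_eq_inter
    have e2 : Iᶜ.filter (fun j => j ∉ J) = Iᶜ ∩ Jᶜ := by
      ext j; simp [Finset.mem_compl]
    rw [e1, e2, Finset.prod_const]
  rw [step2, Finset.inter_comm Iᶜ J]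
  ring

/-- Cardinality of the fiber over `J`. -/
lemma fiber_card (J : Finset (Fin M)) :
    (univ.filter fun w : ∀ j, Fin (n j) =>
        (univ.filter fun j => w j = 0) = J).card
      = ∏ j ∈ Jᶜ, (n j - 1) := by
  have hset : (univ.filter fun w : ∀ j, Fin (n j) =>
        (univ.filter fun j => w j = 0) = J)
      = Fintype.piFinset (fun j => if j ∈ J then ({0} : Finset (Fin (n j))) else {0}ᶜ) := by
    ext w
    simp only [mem_filter, mem_univ, true_and, Fintype.mem_piFinset, Finset.ext_iff]
    constructor
    · intro h j
      by_cases hj : j ∈ J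
      · have := (h j).mpr hj
        simp [hj, this]
      · have : ¬ (w j = 0) := fun h0 => hj ((h j).mp (by simp [h0]))
        simp [hj, this]
    · intro h j
      have := h j
      by_cases hj : j ∈ J
      · simp only [hj, if_true, Finset.mem_singleton] at this
        simp [this, hj]
      · simp only [hj, if_false, Finset.mem_compl, Finset.mem_singleton] at this
        simp [this, hj]
  rw [hset, Fintype.card_piFinset]
  have : ∀ j, (if j ∈ J then ({0} : Finset (Fin (n j))) else {0}ᶜ).card
      = if j ∈ J then 1 else (n j - 1) := by
    intro j
    by_cases hj : j ∈ J
    · simp [hj]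
    · simp [hj, Finset.card_compl]
  rw [Finset.prod_congr rfl fun j _ => this j]
  rw [← Finset.prod_compl_mul_prod J (f := fun j => if j ∈ J then 1 else (n j - 1))]
  rw [Finset.prod_congr rfl (fun j hj => by rw [if_neg (Finset.mem_compl.mp hj)]),
    Finset.prod_congr (rfl : J = J) (fun j hj => by rw [if_pos hj]),
    Finset.prod_const_one, mul_one]

end Tensor

end FSaux

open FSaux in
/-- **Theorem 2 of the paper.** A factor-symmetric matrix on the strata
`S = ∏ j, {1,…,n j}` (entries depending only on the agreement set) is
diagonalizable over `ℝ`, and its characteristic polynomial is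
`∏_J (X - λ_J)^(m_J)` with `λ_J` and `m_J` as described. -/
theorem factor_symmetric_charpoly_and_diagonalizable
    (M : ℕ) (hM : 1 ≤ M) (n : Fin M → ℕ) (hn : ∀ j, 2 ≤ n j)
    (c : Finset (Fin M) → ℝ)
    (A : Matrix (∀ j, Fin (n j)) (∀ j, Fin (n j)) ℝ)
    (hA : ∀ z z' : ∀ j, Fin (n j),
      A z z' = c (Finset.univ.filter fun j => z j = z' j)) :
    A.charpoly =
      ∏ J : Finset (Fin M),
        (X - Polynomial.C (∑ I : Finset (Fin M),
            (-1 : ℝ) ^ (Iᶜ ∩ Jᶜ).card * c I * ∏ k ∈ J ∩ Iᶜ, ((n k : ℝ) - 1))) ^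
          (∏ j ∈ Jᶜ, (n j - 1)) ∧
    ∃ (P : Matrix (∀ j, Fin (n j)) (∀ j, Fin (n j)) ℝ)
      (d : (∀ j, Fin (n j)) → ℝ),
        IsUnit P.det ∧ A = P * Matrix.diagonal d * P⁻¹ := by
  haveI : ∀ j, NeZero (n j) := fun j => ⟨by have := hn j; omega⟩
  have h1 : Pm n * Pinv n = 1 := Pm_mul_Pinv n
  have hPinv : (Pm n)⁻¹ = Pinv n := Matrix.inv_eq_right_inv h1
  have hAP : A * Pm n = Pm n * Matrix.diagonal (dvec n c) := A_mul_Pm n c A hA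
  have hAeq : A = Pm n * Matrix.diagonal (dvec n c) * Pinv n := by
    calc A = A * (Pm n * Pinv n) := by rw [h1, Matrix.mul_one]
      _ = (A * Pm n) * Pinv n := by rw [Matrix.mul_assoc]
      _ = Pm n * Matrix.diagonal (dvec n c) * Pinv n := by rw [hAP]
  constructor
  · rw [hAeq, charpoly_similar (Pm n) (Pinv n) _ h1, charpoly_diag]
    have hstep : ∀ w : ∀ j, Fin (n j),
        X - C (dvec n c w)
          = X - C (∑ I : Finset (Fin M),
              (-1 : ℝ) ^ (Iᶜ ∩ (univ.filter fun j => w j = 0)ᶜ).card * c I *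
                ∏ k ∈ (univ.filter fun j => w j = 0) ∩ Iᶜ, ((n k : ℝ) - 1)) := by
      intro w
      rw [dvec_eq]
    rw [Finset.prod_congr rfl fun w _ => hstep w]
    have := Finset.prod_fiberwise' (univ : Finset (∀ j, Fin (n j)))
      (fun w => univ.filter fun j => w j = 0)
      (fun J : Finset (Fin M) =>
        X - C (∑ I : Finset (Fin M),
          (-1 : ℝ) ^ (Iᶜ ∩ Jᶜ).card * c I * ∏ k ∈ J ∩ Iᶜ, ((n k : ℝ) - 1)))
    rw [← this]
    refine Finset.prod_congr rfl fun J _ => ?_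
    rw [Finset.prod_const, fiber_card]
  · refine ⟨Pm n, dvec n c, ?_, ?_⟩
    · exact Matrix.isUnit_det_of_right_inverse h1
    · rw [hPinv]
      exact hAeq
end

section
/- Let M ≥ 1 and n₁,…,n_M ≥ 2 be integers, S = ∏_{j=1}^M {1,…,n_j}, and let C be a real S×S matrix with C(z,z′) = c_{I(z,z′)} depending only on the agreement set I(z,z′) = {j : z_j = z′_j}. Fix J ⊆ {1,…,M} and let v : S → ℝ be any J-product vector, i.e. v(z) = ∏_{j=1}^M v_j(z_j) where v_j ≡ 1 for every j ∈ J and ∑_{k=1}^{n_j} v_j(k) = 0 for every j ∉ J. Then C v = λ_J v, where λ_J = ∑_{I⊆{1,…,M}} (−1)^{|Iᶜ∩Jᶜ|} c_I ∏_{k∈J∩Iᶜ} (n_k − 1). In particular the vectors v and the fact that they are eigenvectors do not depend on the particular values c_I. -/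
open Finset

/-- **Lemma 2 of the paper (Appendix 2).** Every `J`-product vector
(`v z = ∏ j, w j (z j)` with `w j ≡ 1` for `j ∈ J` and zero-sum coordinates
for `j ∉ J`) is an eigenvector of a factor-symmetric matrix with eigenvalue
`λ_J = ∑_I (−1)^{|Iᶜ∩Jᶜ|} c_I ∏_{k∈J∩Iᶜ} (n_k − 1)`, independently of the
particular values `c_I`. -/
theorem factor_symmetric_product_eigenvector
    (M : ℕ) (hM : 1 ≤ M) (n : Fin M → ℕ) (hn : ∀ j, 2 ≤ n j)
    (c : Finset (Fin M) → ℝ)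
    (A : Matrix (∀ j, Fin (n j)) (∀ j, Fin (n j)) ℝ)
    (hA : ∀ z z' : ∀ j, Fin (n j),
      A z z' = c (Finset.univ.filter fun j => z j = z' j))
    (J : Finset (Fin M))
    (v : (∀ j, Fin (n j)) → ℝ) (w : ∀ j, Fin (n j) → ℝ)
    (hv : ∀ z, v z = ∏ j, w j (z j))
    (hJ : ∀ j ∈ J, ∀ k, w j k = 1)
    (hJc : ∀ j ∉ J, ∑ k, w j k = 0) :
    A.mulVec v =
      (∑ I : Finset (Fin M),
        (-1 : ℝ) ^ (Iᶜ ∩ Jᶜ).card * c I * ∏ k ∈ J ∩ Iᶜ, ((n k : ℝ) - 1)) • v := by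
  classical
  funext z
  simp only [Matrix.mulVec, dotProduct, Pi.smul_apply, smul_eq_mul,
    Finset.sum_mul]
  rw [← Finset.sum_fiberwise_of_maps_to
    (t := (Finset.univ : Finset (Finset (Fin M))))
    (g := fun z' : ∀ j, Fin (n j) => Finset.univ.filter fun j => z j = z' j)
    (fun _ _ => Finset.mem_univ _) (fun z' => A z z' * v z')]
  refine Finset.sum_congr rfl fun I _ => ?_
  -- describe the fiber as a product set
  have hfib : (Finset.univ.filter fun z' : ∀ j, Fin (n j) =>
        (Finset.univ.filter fun j => z j = z' j) = I)
      = Fintype.piFinset (fun j => if j ∈ I then ({z j} : Finset (Fin (n j))) else {z j}ᶜ) := by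
    ext z'
    simp only [Finset.mem_filter, Finset.mem_univ, true_and, Fintype.mem_piFinset,
      Finset.ext_iff, Finset.mem_filter, Finset.mem_univ, true_and]
    constructor
    · intro h j
      by_cases hj : j ∈ I
      · rw [if_pos hj]; simp [((h j).2 hj).symm]
      · rw [if_neg hj]
        simp only [Finset.mem_compl, Finset.mem_singleton]
        intro hz; exact hj ((h j).1 hz.symm)
    · intro h j
      by_cases hj : j ∈ I
      · have := h j; rw [if_pos hj] at this
        simp only [Finset.mem_singleton] at this
        simp [hj, this]
      · have := h j; rw [if_neg hj] at this
        simp only [Finset.mem_compl, Finset.mem_singleton] at this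
        simp only [hj, iff_false]
        intro hz; exact this hz.symm
  have hstep : ∀ z' ∈ (Finset.univ.filter fun z' : ∀ j, Fin (n j) =>
        (Finset.univ.filter fun j => z j = z' j) = I),
      A z z' * v z' = c I * ∏ j, w j (z' j) := by
    intro z' hz'
    rw [hA, (Finset.mem_filter.mp hz').2, hv]
  rw [Finset.sum_congr rfl hstep, ← Finset.mul_sum, hfib,
    ← Finset.prod_univ_sum]
  -- compute each factor
  have hfac : ∀ j, (∑ k ∈ (if j ∈ I then ({z j} : Finset (Fin (n j))) else {z j}ᶜ), w j k)
      = (if j ∈ Iᶜ ∩ Jᶜ then (-1 : ℝ) else 1) *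
        (if j ∈ J ∩ Iᶜ then ((n j : ℝ) - 1) else w j (z j)) := by
    intro j
    have hcompl : ∑ k ∈ ({z j} : Finset (Fin (n j)))ᶜ, w j k
        = (∑ k, w j k) - w j (z j) := by
      have := Finset.sum_add_sum_compl ({z j} : Finset (Fin (n j))) (w j)
      simp only [Finset.sum_singleton] at this
      linarith
    by_cases hI : j ∈ I <;> by_cases hJ' : j ∈ J
    · simp [hI, hJ']
    · simp [hI, hJ']
    · have hA1 : j ∉ Iᶜ ∩ Jᶜ := by simp [hJ']
      have hA2 : j ∈ J ∩ Iᶜ := by simp [hI, hJ']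
      rw [if_neg hI, if_neg hA1, if_pos hA2, hcompl, hJ j hJ' (z j)]
      have hsum : ∑ k, w j k = (n j : ℝ) := by
        rw [Finset.sum_congr rfl fun k _ => hJ j hJ' k]
        simp
      rw [hsum]; ring
    · have hA1 : j ∈ Iᶜ ∩ Jᶜ := by simp [hI, hJ']
      have hA2 : j ∉ J ∩ Iᶜ := by simp [hJ']
      rw [if_neg hI, if_pos hA1, if_neg hA2, hcompl, hJc j hJ']
      ring
  rw [Finset.prod_congr rfl fun j _ => hfac j, Finset.prod_mul_distrib]
  have h1 : (∏ j, (if j ∈ Iᶜ ∩ Jᶜ then (-1 : ℝ) else 1))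
      = (-1 : ℝ) ^ (Iᶜ ∩ Jᶜ).card := by
    rw [Finset.prod_ite_mem Finset.univ (Iᶜ ∩ Jᶜ) (fun _ => (-1 : ℝ)),
      Finset.univ_inter, Finset.prod_const]
  have h2 : (∏ j, (if j ∈ J ∩ Iᶜ then ((n j : ℝ) - 1) else w j (z j)))
      = (∏ k ∈ J ∩ Iᶜ, ((n k : ℝ) - 1)) * v z := by
    rw [Finset.prod_ite, Finset.filter_mem_eq_inter, Finset.univ_inter]
    congr 1
    rw [hv]
    exact Finset.prod_subset (Finset.subset_univ _) (fun x _ hx => by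
      simp only [Finset.mem_filter, Finset.mem_univ, true_and, not_not] at hx
      exact hJ x (Finset.mem_inter.mp hx).1 (z x))
  rw [h1, h2, hv]
  ring
end

section
/- Let M ≥ 2 and n₁,…,n_M ≥ 2 be integers, Q = ∏_{i=1}^M n_i − ∑_{i=1}^M n_i + M − 1, and let (c_I)_{I⊆{1,…,M}} be the equal-prevalence correlation family: c_I = (M − 1 − ∑_{i∈I} n_i)/Q for every proper subset I ⊊ {1,…,M}, and c_{{1,…,M}} = 1. For J ⊆ {1,…,M} let λ_J = ∑_{I⊆{1,…,M}} (−1)^{|Iᶜ∩Jᶜ|} c_I ∏_{k∈J∩Iᶜ} (n_k − 1). Then λ_J = (∏_{i=1}^M n_i)/Q whenever |J| < M − 1, and λ_J = 0 whenever |J| ≥ M − 1. Consequently, the largest eigenvalue of the S×S matrix with entries c_{I(z,z′)} (S = ∏_j {1,…,n_j}, I(z,z′) the agreement set) equals λ_max = (∏_{i=1}^M n_i)/(∏_{i=1}^M n_i − ∑_{i=1}^M n_i + M − 1). -/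
/-!
Write `Q c_I = M - 1 - ∑_{i ∈ I} n_i + [I = univ] ∏ n_i`. The transform `c ↦ λ` is linear, and
with the weights `w_k = n_k - 1` on `J` and `-1` off `J` its sums over `I` collapse to products of
factors `1 + w_k`, which vanish as soon as they meet `Jᶜ`; hence only `|Jᶜ| ≤ 1` can cancel the
contribution `∏ n_i` of `I = univ`.

For the matrix, `Q A = (M - 1) 𝟙𝟙ᵀ - ∑_j n_j E_j + (∏ n_i) 1`, where `E_j` is the indicator of
agreement in coordinate `j`. A product vector `∏_j h_j(z_j)` with every `h_j` of zero sum is killed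
by `𝟙𝟙ᵀ` and by each `E_j`, which gives the eigenvalue `∏ n_i / Q`. Conversely, Cauchy–Schwarz on
the fibres of `z ↦ z_j` gives `n_j vᵀ E_j v ≥ (∑ v)²`, so the first two terms of `Q A` are negative
semidefinite and no eigenvalue exceeds `∏ n_i / Q`.
-/

open Finset
open scoped Matrix

theorem sum_le_prod_of_two_le {ι : Type*} (s : Finset ι) {f : ι → ℕ}
    (hf : ∀ i ∈ s, 2 ≤ f i) : ∑ i ∈ s, f i ≤ ∏ i ∈ s, f i := by
  induction s using Finset.cons_induction with
  | empty => simp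
  | cons a t _ ih =>
    rw [sum_cons, prod_cons]
    have ha2 := hf a (mem_cons_self a t)
    have ht : ∀ i ∈ t, 2 ≤ f i := fun i hi => hf i (mem_cons_of_mem hi)
    rcases t.eq_empty_or_nonempty with rfl | ⟨b, hb⟩
    · simp
    · have hp : 2 ≤ ∏ i ∈ t, f i :=
        (ht b hb).trans (single_le_prod' (fun i hi => one_le_two.trans (ht i hi)) hb)
      nlinarith [ih ht]

theorem prod_sub_sum_add_card_sub_one_pos {ι : Type*} [Fintype ι] (n : ι → ℕ)
    (hn : ∀ i, 2 ≤ n i) (hι : 2 ≤ Fintype.card ι) :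
    0 < ∏ i, (n i : ℝ) - ∑ i, (n i : ℝ) + Fintype.card ι - 1 := by
  have hsum : ∑ i, (n i : ℝ) ≤ ∏ i, (n i : ℝ) := by
    exact_mod_cast sum_le_prod_of_two_le univ fun i _ => hn i
  have hι' : (2 : ℝ) ≤ Fintype.card ι := by exact_mod_cast hι
  linarith

section SignedTransform

variable {ι R : Type*} [DecidableEq ι] [CommRing R]

theorem prod_one_add_ite_mem_neg_one (x : ι → R) (J s : Finset ι) :
    ∏ k ∈ s, (1 + if k ∈ J then x k else -1) = if s ⊆ J then ∏ k ∈ s, (1 + x k) else 0 :=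
  calc ∏ k ∈ s, (1 + if k ∈ J then x k else -1)
      = ∏ k ∈ s, if k ∈ J then 1 + x k else 0 := prod_congr rfl fun k _ => by split_ifs <;> ring
    _ = _ := prod_ite_zero

variable [Fintype ι]

theorem prod_ite_mem_neg_one (x : ι → R) (J K : Finset ι) :
    ∏ k ∈ K, (if k ∈ J then x k else -1) = (-1) ^ (K ∩ Jᶜ).card * ∏ k ∈ J ∩ K, x k := by
  rw [prod_ite, prod_const, filter_mem_eq_inter, inter_comm K J, mul_comm]
  congr 3
  ext; simp

theorem sum_prod_compl (w : ι → R) : ∑ I : Finset ι, ∏ k ∈ Iᶜ, w k = ∏ k, (1 + w k) := by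
  rw [prod_one_add, powerset_univ]
  exact Fintype.sum_bijective compl compl_involutive.bijective _ _ fun _ => rfl

theorem sum_ite_mem_prod_compl (w : ι → R) (i : ι) :
    ∑ I : Finset ι, (if i ∈ I then ∏ k ∈ Iᶜ, w k else 0) = ∏ k ∈ univ.erase i, (1 + w k) := by
  rw [prod_one_add, ← sum_filter]
  refine sum_nbij' compl compl (fun I hI => ?_) (fun K hK => ?_)
    (fun _ _ => compl_compl _) (fun _ _ => compl_compl _) (fun _ _ => rfl)
  · simpa [subset_erase] using hI
  · simpa [subset_erase] using hK

/-- The eigenvalue `λ_J` of Theorem 2, for the factor sizes `n k = x k + 1`. -/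
def eigenTransform (x : ι → R) (c : Finset ι → R) (J : Finset ι) : R :=
  ∑ I : Finset ι, (-1) ^ (Iᶜ ∩ Jᶜ).card * c I * ∏ k ∈ J ∩ Iᶜ, x k

theorem eigenTransform_const_mul (x : ι → R) (q : R) (c : Finset ι → R) (J : Finset ι) :
    eigenTransform x (fun I => q * c I) J = q * eigenTransform x c J := by
  simp_rw [eigenTransform, mul_sum]
  exact sum_congr rfl fun _ _ => by ring

theorem eigenTransform_of_affine (x : ι → R) (a p : R) (b : ι → R) (c : Finset ι → R)
    (hc : ∀ I, c I = a - ∑ i ∈ I, b i + if I = univ then p else 0) (J : Finset ι) :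
    eigenTransform x c J =
      a * (if J = univ then ∏ k, (1 + x k) else 0)
        - ∑ i, b i * (if univ.erase i ⊆ J then ∏ k ∈ univ.erase i, (1 + x k) else 0) + p := by
  have hterm : ∀ I : Finset ι, (-1) ^ (Iᶜ ∩ Jᶜ).card * c I * ∏ k ∈ J ∩ Iᶜ, x k
      = c I * ∏ k ∈ Iᶜ, (if k ∈ J then x k else -1) := by
    intro I
    rw [prod_ite_mem_neg_one]
    ring
  have hlinear : ∀ W : Finset ι → R, ∑ I : Finset ι, (∑ i ∈ I, b i) * W I
      = ∑ i, b i * ∑ I : Finset ι, if i ∈ I then W I else 0 := by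
    intro W
    simp_rw [sum_mul, mul_sum, mul_ite, mul_zero]
    rw [sum_comm]
    simp_rw [sum_ite_mem, univ_inter]
  calc eigenTransform x c J
      = a * ∑ I : Finset ι, ∏ k ∈ Iᶜ, (if k ∈ J then x k else -1)
          - ∑ I : Finset ι, (∑ i ∈ I, b i) * ∏ k ∈ Iᶜ, (if k ∈ J then x k else -1)
          + ∑ I : Finset ι,
              (if I = univ then p else 0) * ∏ k ∈ Iᶜ, (if k ∈ J then x k else -1) := by
        simp_rw [eigenTransform, hterm, hc, add_mul, sub_mul, sum_add_distrib, sum_sub_distrib,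
          mul_sum]
    _ = _ := by
        rw [hlinear, sum_prod_compl]
        simp_rw [sum_ite_mem_prod_compl, prod_one_add_ite_mem_neg_one, univ_subset_iff]
        simp

theorem eigenTransform_sub_one_of_affine (n : ι → R) (a : R) (c : Finset ι → R)
    (hc : ∀ I, c I = a - ∑ i ∈ I, n i + if I = univ then ∏ i, n i else 0) (J : Finset ι) :
    eigenTransform (fun k => n k - 1) c J =
      a * (if J = univ then ∏ i, n i else 0)
        - ∑ i, (if univ.erase i ⊆ J then ∏ i, n i else 0) + ∏ i, n i := by
  rw [eigenTransform_of_affine _ a _ n c hc]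
  simp_rw [add_sub_cancel, mul_ite, mul_zero, mul_prod_erase univ n (mem_univ _)]

theorem eq_univ_or_exists_eq_erase_of_card_le {J : Finset ι} (hJ : Fintype.card ι ≤ J.card + 1) :
    J = univ ∨ ∃ j, J = univ.erase j := by
  by_cases hJu : J = univ
  · exact .inl hJu
  obtain ⟨j, hj⟩ : ∃ j, j ∉ J := by simpa [eq_univ_iff_forall] using hJu
  refine .inr ⟨j, eq_of_subset_of_card_le (subset_erase.2 ⟨subset_univ J, hj⟩) ?_⟩
  rw [card_erase_of_mem (mem_univ j), card_univ]
  omega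

theorem eigenTransform_sub_one_eq_prod_of_card_lt (n : ι → R) (a : R) (c : Finset ι → R)
    (hc : ∀ I, c I = a - ∑ i ∈ I, n i + if I = univ then ∏ i, n i else 0)
    {J : Finset ι} (hJ : J.card + 1 < Fintype.card ι) :
    eigenTransform (fun k => n k - 1) c J = ∏ i, n i := by
  have hJu : J ≠ univ := by rintro rfl; simp at hJ
  have herase : ∀ i, ¬ univ.erase i ⊆ J := fun i h => by
    have := card_le_card h
    rw [card_erase_of_mem (mem_univ i), card_univ] at this
    omega
  simp [eigenTransform_sub_one_of_affine n _ c hc, hJu, herase]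

theorem eigenTransform_sub_one_eq_zero_of_card_le (n : ι → R) (c : Finset ι → R)
    (hc : ∀ I, c I = (Fintype.card ι - 1) - ∑ i ∈ I, n i + if I = univ then ∏ i, n i else 0)
    {J : Finset ι} (hJ : Fintype.card ι ≤ J.card + 1) :
    eigenTransform (fun k => n k - 1) c J = 0 := by
  rw [eigenTransform_sub_one_of_affine n _ c hc]
  rcases eq_univ_or_exists_eq_erase_of_card_le hJ with rfl | ⟨j, rfl⟩
  · simp only [if_true, subset_univ, sum_const, card_univ, nsmul_eq_mul]
    ring
  · have hne : univ.erase j ≠ univ := fun h => by simpa using h.ge (mem_univ j)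
    have hsub : ∀ i, univ.erase i ⊆ univ.erase j ↔ i = j := fun i =>
      ⟨fun h => by by_contra hij; simpa using h (mem_erase.2 ⟨Ne.symm hij, mem_univ j⟩),
        fun h => h ▸ subset_rfl⟩
    simp [hne, hsub]

end SignedTransform

section FiberMatrix

variable {X Y : Type*} [DecidableEq Y]

def fiberMatrix (f : X → Y) : Matrix X X ℝ := Matrix.of fun x x' => if f x = f x' then 1 else 0

variable [Fintype X]

theorem fiberMatrix_mulVec_apply (f : X → Y) (v : X → ℝ) (x : X) :
    (fiberMatrix f *ᵥ v) x = ∑ x' with f x' = f x, v x' := by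
  simp [fiberMatrix, Matrix.mulVec, dotProduct, sum_filter, eq_comm]

theorem fiberMatrix_mulVec_eq_zero {f : X → Y} {v : X → ℝ}
    (hv : ∀ y, ∑ x with f x = y, v x = 0) : fiberMatrix f *ᵥ v = 0 :=
  funext fun x => by rw [fiberMatrix_mulVec_apply, hv]; rfl

variable [Fintype Y]

theorem dotProduct_fiberMatrix_mulVec (f : X → Y) (v : X → ℝ) :
    v ⬝ᵥ (fiberMatrix f *ᵥ v) = ∑ y, (∑ x with f x = y, v x) ^ 2 := by
  simp_rw [dotProduct, fiberMatrix_mulVec_apply, sq, sum_mul]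
  rw [← sum_fiberwise univ f]
  refine sum_congr rfl fun y _ => sum_congr rfl fun x hx => ?_
  rw [(mem_filter.1 hx).2]

theorem sq_sum_le_card_mul_dotProduct_fiberMatrix_mulVec (f : X → Y) (v : X → ℝ) :
    (∑ x, v x) ^ 2 ≤ Fintype.card Y * (v ⬝ᵥ (fiberMatrix f *ᵥ v)) := by
  rw [dotProduct_fiberMatrix_mulVec, ← sum_fiberwise univ f v]
  exact sq_sum_le_card_mul_sum_sq

end FiberMatrix

section ProductSpace

variable {ι : Type*} [Fintype ι] [DecidableEq ι] {κ : ι → Type*} [∀ i, DecidableEq (κ i)]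

variable (κ) in
/-- Entrywise `a - ∑_{j ∈ I(z,z')} b j + p [z = z']`, with `I(z,z')` the agreement set; the fibre
matrix of the constant map is the all-ones matrix. -/
def agreementMatrix (a : ℝ) (b : ι → ℝ) (p : ℝ) : Matrix (∀ i, κ i) (∀ i, κ i) ℝ :=
  a • fiberMatrix (fun _ => ()) - ∑ j, b j • fiberMatrix (fun z : ∀ i, κ i => z j) + p • 1

theorem smul_eq_agreementMatrix (A : Matrix (∀ i, κ i) (∀ i, κ i) ℝ) (c : Finset ι → ℝ)
    (q a p : ℝ) (b : ι → ℝ) (hc : ∀ I, q * c I = a - ∑ i ∈ I, b i + if I = univ then p else 0)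
    (hA : ∀ z z', A z z' = c {j | z j = z' j}) :
    q • A = agreementMatrix κ a b p := by
  ext z z'
  have hI : ({j | z j = z' j} : Finset ι) = univ ↔ z = z' := by
    simp [eq_univ_iff_forall, funext_iff]
  simp [agreementMatrix, fiberMatrix, hA, hc, hI, Matrix.one_apply, Matrix.sum_apply, sum_filter]

variable [∀ i, Fintype (κ i)]

theorem sum_filter_apply_eq_prod_sum (h : ∀ i, κ i → ℝ) (j : ι) (a : κ j) :
    ∑ z : (∀ i, κ i) with z j = a, ∏ i, h i (z i) =
      ∏ i, ∑ x ∈ Function.update (fun i => (univ : Finset (κ i))) j {a} i, h i x := by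
  rw [prod_univ_sum]
  congr 1
  ext z
  simp only [mem_filter, mem_univ, true_and, Fintype.mem_piFinset]
  constructor
  · rintro rfl i
    rcases eq_or_ne i j with rfl | hij
    · simp
    · simp [Function.update_of_ne hij]
  · intro hz
    simpa using hz j

theorem sum_filter_apply_prod_eq_zero [Nontrivial ι] (h : ∀ i, κ i → ℝ)
    (hh : ∀ i, ∑ x, h i x = 0) (j : ι) (a : κ j) :
    ∑ z : (∀ i, κ i) with z j = a, ∏ i, h i (z i) = 0 := by
  obtain ⟨k, hkj⟩ := exists_ne j
  rw [sum_filter_apply_eq_prod_sum]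
  exact prod_eq_zero (mem_univ k) (by simpa [Function.update_of_ne hkj] using hh k)

theorem exists_ne_zero_sum_eq_zero (α : Type*) [Fintype α] [DecidableEq α] [Nontrivial α] :
    ∃ h : α → ℝ, h ≠ 0 ∧ ∑ x, h x = 0 := by
  obtain ⟨a, b, hab⟩ := exists_pair_ne α
  refine ⟨Pi.single a 1 - Pi.single b 1, fun h => ?_, by simp⟩
  simpa [hab] using congr_fun h a

theorem exists_ne_zero_sum_filter_apply_eq_zero [Nontrivial ι] [∀ i, Nontrivial (κ i)] :
    ∃ v : (∀ i, κ i) → ℝ, v ≠ 0 ∧ ∀ j (a : κ j), ∑ z with z j = a, v z = 0 := by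
  choose h hne hsum using fun i => exists_ne_zero_sum_eq_zero (κ i)
  choose z hz using fun i => Function.ne_iff.1 (hne i)
  refine ⟨fun z => ∏ i, h i (z i), fun hv => ?_, sum_filter_apply_prod_eq_zero h hsum⟩
  exact prod_ne_zero_iff.2 (fun i _ => hz i) (congr_fun hv z)

theorem exists_agreementMatrix_mulVec_eq_smul [Nontrivial ι] [∀ i, Nontrivial (κ i)]
    (a p : ℝ) (b : ι → ℝ) : ∃ v ≠ 0, agreementMatrix κ a b p *ᵥ v = p • v := by
  obtain ⟨v, hv, hfiber⟩ := exists_ne_zero_sum_filter_apply_eq_zero (κ := κ)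
  obtain ⟨j⟩ := (inferInstance : Nonempty ι)
  have hsum : ∑ z, v z = 0 := by
    rw [← sum_fiberwise univ (fun z : ∀ i, κ i => z j) v]
    exact sum_eq_zero fun a _ => hfiber j a
  refine ⟨v, hv, ?_⟩
  simp [agreementMatrix, Matrix.add_mulVec, Matrix.sub_mulVec, Matrix.sum_mulVec,
    Matrix.smul_mulVec, fiberMatrix_mulVec_eq_zero (hfiber _),
    fiberMatrix_mulVec_eq_zero (f := fun _ => ()) (fun _ => by simpa using hsum)]

theorem dotProduct_agreementMatrix_mulVec_le (a p : ℝ) (b : ι → ℝ) (ha : a ≤ Fintype.card ι)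
    (hb : ∀ j, (Fintype.card (κ j) : ℝ) ≤ b j) (v : (∀ i, κ i) → ℝ) :
    v ⬝ᵥ (agreementMatrix κ a b p *ᵥ v) ≤ p * (v ⬝ᵥ v) := by
  have hconst : v ⬝ᵥ (fiberMatrix (fun _ => ()) *ᵥ v) = (∑ z, v z) ^ 2 := by
    simp [dotProduct_fiberMatrix_mulVec]
  have hfiber : ∀ j, (∑ z, v z) ^ 2 ≤ b j * (v ⬝ᵥ (fiberMatrix (fun z : ∀ i, κ i => z j) *ᵥ v)) :=
    fun j => (sq_sum_le_card_mul_dotProduct_fiberMatrix_mulVec _ v).trans <|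
      mul_le_mul_of_nonneg_right (hb j) (by rw [dotProduct_fiberMatrix_mulVec]; positivity)
  have hsum : a * (∑ z, v z) ^ 2 ≤ ∑ j, b j * (v ⬝ᵥ (fiberMatrix (fun z : ∀ i, κ i => z j) *ᵥ v)) :=
    calc a * (∑ z, v z) ^ 2 ≤ Fintype.card ι * (∑ z, v z) ^ 2 := by gcongr
      _ = ∑ _j : ι, (∑ z, v z) ^ 2 := by simp
      _ ≤ _ := sum_le_sum fun j _ => hfiber j
  simp only [agreementMatrix, Matrix.add_mulVec, Matrix.sub_mulVec, Matrix.sum_mulVec,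
    Matrix.smul_mulVec, Matrix.one_mulVec, dotProduct_add, dotProduct_sub, dotProduct_sum,
    dotProduct_smul, smul_eq_mul, hconst]
  linarith

theorem exists_mulVec_eq_smul_of_smul_eq_agreementMatrix [Nontrivial ι] [∀ i, Nontrivial (κ i)]
    {A : Matrix (∀ i, κ i) (∀ i, κ i) ℝ} {q a p : ℝ} {b : ι → ℝ} (hq : q ≠ 0)
    (hA : q • A = agreementMatrix κ a b p) : ∃ v ≠ 0, A *ᵥ v = (p / q) • v := by
  obtain ⟨v, hv, hBv⟩ := exists_agreementMatrix_mulVec_eq_smul (κ := κ) a p b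
  refine ⟨v, hv, ?_⟩
  rw [← hA, Matrix.smul_mulVec] at hBv
  rw [div_eq_inv_mul, mul_smul, ← hBv, inv_smul_smul₀ hq]

theorem le_div_of_smul_eq_agreementMatrix {A : Matrix (∀ i, κ i) (∀ i, κ i) ℝ} {q a p : ℝ}
    {b : ι → ℝ} (hq : 0 < q) (ha : a ≤ Fintype.card ι) (hb : ∀ j, (Fintype.card (κ j) : ℝ) ≤ b j)
    (hA : q • A = agreementMatrix κ a b p) {t : ℝ} {v : (∀ i, κ i) → ℝ} (hv : v ≠ 0)
    (hAv : A *ᵥ v = t • v) : t ≤ p / q := by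
  have hle := dotProduct_agreementMatrix_mulVec_le a p b ha hb v
  rw [← hA, Matrix.smul_mulVec, hAv, smul_smul, dotProduct_smul, smul_eq_mul] at hle
  have hvv : 0 < v ⬝ᵥ v := by simpa using Matrix.dotProduct_self_star_pos_iff.2 hv
  rw [le_div_iff₀ hq, mul_comm]
  exact le_of_mul_le_mul_right hle hvv

end ProductSpace

/-- **Lemma 1 of the paper.** For the equal-prevalence correlation family
`c_I = (M − 1 − ∑_{i∈I} n_i)/Q` (`I ⊊ {1,…,M}`, `c_{{1,…,M}} = 1`,
`Q = ∏ n_i − ∑ n_i + M − 1`), the eigenvalues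
`λ_J = ∑_I (−1)^{|Iᶜ∩Jᶜ|} c_I ∏_{k∈J∩Iᶜ}(n_k − 1)` satisfy
`λ_J = (∏ n_i)/Q` when `|J| < M − 1` and `λ_J = 0` when `|J| ≥ M − 1`;
consequently the largest eigenvalue of the factor-symmetric matrix with
entries `c_{I(z,z′)}` equals `(∏ n_i)/Q`. -/
theorem equal_prevalence_eigenvalues_and_max
    (M : ℕ) (hM : 2 ≤ M) (n : Fin M → ℕ) (hn : ∀ j, 2 ≤ n j)
    (Q : ℝ) (hQ : Q = (∏ i, (n i : ℝ)) - (∑ i, (n i : ℝ)) + M - 1)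
    (c : Finset (Fin M) → ℝ)
    (hc : ∀ I : Finset (Fin M), I ≠ Finset.univ →
      c I = ((M : ℝ) - 1 - ∑ i ∈ I, (n i : ℝ)) / Q)
    (hcuniv : c Finset.univ = 1)
    (lam : Finset (Fin M) → ℝ)
    (hlam : ∀ J : Finset (Fin M),
      lam J = ∑ I : Finset (Fin M),
        (-1 : ℝ) ^ (Iᶜ ∩ Jᶜ).card * c I * ∏ k ∈ J ∩ Iᶜ, ((n k : ℝ) - 1))
    (A : Matrix (∀ j, Fin (n j)) (∀ j, Fin (n j)) ℝ)
    (hA : ∀ z z' : ∀ j, Fin (n j),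
      A z z' = c (Finset.univ.filter fun j => z j = z' j)) :
    (∀ J : Finset (Fin M), J.card < M - 1 → lam J = (∏ i, (n i : ℝ)) / Q) ∧
    (∀ J : Finset (Fin M), M - 1 ≤ J.card → lam J = 0) ∧
    (∃ v : (∀ j, Fin (n j)) → ℝ, v ≠ 0 ∧
      A.mulVec v = ((∏ i, (n i : ℝ)) / Q) • v) ∧
    (∀ (t : ℝ) (v : (∀ j, Fin (n j)) → ℝ), v ≠ 0 → A.mulVec v = t • v →
      t ≤ (∏ i, (n i : ℝ)) / Q) := by
  have hQ_pos : 0 < Q := by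
    simpa [hQ] using prod_sub_sum_add_card_sub_one_pos n hn (by simpa using hM)
  have hQc : ∀ I, Q * c I = ((Fintype.card (Fin M) : ℝ) - 1) - ∑ i ∈ I, (n i : ℝ)
      + if I = univ then ∏ i, (n i : ℝ) else 0 := by
    intro I
    split_ifs with hI
    · rw [hI, hcuniv, hQ, mul_one, Fintype.card_fin]
      ring
    · rw [hc I hI, mul_div_cancel₀ _ hQ_pos.ne', Fintype.card_fin, add_zero]
  have hQlam : ∀ J, Q * lam J = eigenTransform (fun k => (n k : ℝ) - 1) (fun I => Q * c I) J := by
    intro J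
    rw [hlam, eigenTransform_const_mul]
    rfl
  have hQA : Q • A = agreementMatrix (fun j => Fin (n j)) (M - 1) (fun j => n j) (∏ i, (n i : ℝ)) :=
    smul_eq_agreementMatrix A c Q _ _ _ (by simpa using hQc) hA
  have : Nontrivial (Fin M) := Fin.nontrivial_iff_two_le.2 hM
  have : ∀ j, Nontrivial (Fin (n j)) := fun j => Fin.nontrivial_iff_two_le.2 (hn j)
  refine ⟨fun J hJ => ?_, fun J hJ => ?_, exists_mulVec_eq_smul_of_smul_eq_agreementMatrix
    hQ_pos.ne' hQA, fun t v hv hAv => le_div_of_smul_eq_agreementMatrix hQ_pos (by simp)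
    (by simp) hQA hv hAv⟩
  · rw [eq_div_iff hQ_pos.ne', mul_comm, hQlam,
      eigenTransform_sub_one_eq_prod_of_card_lt _ _ _ hQc (by simp; omega)]
  · rw [← mul_right_inj' hQ_pos.ne', hQlam, mul_zero,
      eigenTransform_sub_one_eq_zero_of_card_le _ _ hQc (by simp; omega)]
end

section
/- Let M ≥ 2 and n₁,…,n_M ≥ 2 be integers, Q = ∏_{i=1}^M n_i − ∑_{i=1}^M n_i + M − 1, and let c_I = (M − 1 − ∑_{i∈I} n_i)/Q for proper subsets I ⊊ {1,…,M} with c_{{1,…,M}} = 1. Then for every J ⊆ {1,…,M} with |J| = M − 1 one has λ_J = ∑_{I⊆{1,…,M}} (−1)^{|Iᶜ∩Jᶜ|} c_I ∏_{k∈J∩Iᶜ} (n_k − 1) = 0. -/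
open Finset

private lemma auxC {α : Type*} [DecidableEq α] (s : Finset α) (f : α → ℕ)
    (hf : ∀ i ∈ s, 2 ≤ f i) :
    (∑ i ∈ s, f i) + 1 ≤ (∏ i ∈ s, f i) + s.card := by
  induction s using Finset.induction_on with
  | empty => simp
  | @insert a s ha ih =>
    have hfa := hf a (mem_insert_self a s)
    have ih' := ih fun i hi => hf i (mem_insert_of_mem hi)
    have hp : 1 ≤ ∏ i ∈ s, f i :=
      Finset.one_le_prod' fun i hi => by linarith [hf i (mem_insert_of_mem hi)]
    rw [Finset.sum_insert ha, Finset.prod_insert ha, Finset.card_insert_of_notMem ha]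
    nlinarith

private lemma auxD {α : Type*} [DecidableEq α] (s : Finset α) (f : α → ℕ)
    (hf : ∀ i ∈ s, 2 ≤ f i) (hs : 2 ≤ s.card) :
    (∑ i ∈ s, f i) + 2 ≤ (∏ i ∈ s, f i) + s.card := by
  obtain ⟨a, ha⟩ : s.Nonempty := Finset.card_pos.mp (by omega)
  obtain ⟨b, hb⟩ : (s.erase a).Nonempty := by
    rw [← Finset.card_pos, Finset.card_erase_of_mem ha]; omega
  have hC := auxC (s.erase a) f (fun i hi => hf i (Finset.mem_of_mem_erase hi))
  have hp2 : 2 ≤ ∏ i ∈ s.erase a, f i :=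
    le_trans (hf b (Finset.mem_of_mem_erase hb))
      (Finset.single_le_prod'
        (fun i hi => by linarith [hf i (Finset.mem_of_mem_erase hi)]) hb)
  have hfa := hf a ha
  have hsum := Finset.add_sum_erase s f ha
  have hprod := Finset.mul_prod_erase s f ha
  have hcard : s.card = (s.erase a).card + 1 := by
    rw [Finset.card_erase_of_mem ha]; omega
  rw [← hsum, ← hprod, hcard]
  nlinarith

/-- **Second step of the proof of Lemma 1 of the paper (case `#Jᶜ = 1`).**
For the equal-prevalence correlation family, `λ_J = 0` for every
`J ⊆ {1,…,M}` with `|J| = M − 1`. -/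
theorem equal_prevalence_lambda_zero_of_card_eq_pred
    (M : ℕ) (hM : 2 ≤ M) (n : Fin M → ℕ) (hn : ∀ j, 2 ≤ n j)
    (Q : ℝ) (hQ : Q = (∏ i, (n i : ℝ)) - (∑ i, (n i : ℝ)) + M - 1)
    (c : Finset (Fin M) → ℝ)
    (hc : ∀ I : Finset (Fin M), I ≠ Finset.univ →
      c I = ((M : ℝ) - 1 - ∑ i ∈ I, (n i : ℝ)) / Q)
    (hcuniv : c Finset.univ = 1) :
    ∀ J : Finset (Fin M), J.card = M - 1 →
      (∑ I : Finset (Fin M),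
        (-1 : ℝ) ^ (Iᶜ ∩ Jᶜ).card * c I * ∏ k ∈ J ∩ Iᶜ, ((n k : ℝ) - 1)) = 0 := by
  classical
  intro J hJ
  -- Q is positive
  have hQnat : (∑ i, n i) + 2 ≤ (∏ i, n i) + M := by
    have := auxD Finset.univ n (fun i _ => hn i) (by simp [hM])
    simpa using this
  have hQpos : (0 : ℝ) < Q := by
    have h : ((∑ i, n i : ℕ) : ℝ) + 2 ≤ ((∏ i, n i : ℕ) : ℝ) + M := by
      exact_mod_cast hQnat
    push_cast at h
    rw [hQ]; linarith
  have hQne : Q ≠ 0 := ne_of_gt hQpos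
  -- extract the single element of `Jᶜ`
  have hJc : Jᶜ.card = 1 := by
    have h := Finset.card_compl J
    rw [Fintype.card_fin] at h
    omega
  obtain ⟨j, hj⟩ := Finset.card_eq_one.mp hJc
  have hjJ : j ∉ J := by
    have : j ∈ Jᶜ := by rw [hj]; exact Finset.mem_singleton_self j
    simpa using this
  have hins : insert j J = Finset.univ := by
    apply Finset.eq_univ_of_card
    rw [Finset.card_insert_of_notMem hjJ, hJ, Fintype.card_fin]
    omega
  have hJne : J ≠ Finset.univ := by
    intro h
    have := Finset.card_univ (α := Fin M)
    rw [← h, hJ, Fintype.card_fin] at this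
    omega
  -- pair each `S ⊆ J` with `insert j S`
  have key : ∀ S ∈ J.powerset,
      ((-1 : ℝ) ^ ((Sᶜ ∩ Jᶜ).card) * c S * ∏ k ∈ J ∩ Sᶜ, ((n k : ℝ) - 1)
      + (-1 : ℝ) ^ (((insert j S)ᶜ ∩ Jᶜ).card) * c (insert j S) *
          ∏ k ∈ J ∩ (insert j S)ᶜ, ((n k : ℝ) - 1))
      = (c (insert j S) - c S) * ∏ k ∈ J \ S, ((n k : ℝ) - 1) := by
    intro S hS
    rw [Finset.mem_powerset] at hS
    have hjS : j ∉ S := fun h => hjJ (hS h)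
    have h1 : Sᶜ ∩ Jᶜ = {j} := by
      rw [hj]; exact Finset.inter_singleton_of_mem (Finset.mem_compl.mpr hjS)
    have h2 : (insert j S)ᶜ ∩ Jᶜ = ∅ := by
      rw [hj]
      exact Finset.inter_singleton_of_notMem (by simp)
    have h3 : J ∩ Sᶜ = J \ S := by
      ext k
      simp [Finset.mem_sdiff, Finset.mem_compl, Finset.mem_inter]
    have h4 : J ∩ (insert j S)ᶜ = J \ S := by
      ext k
      by_cases hkj : k = j
      · subst hkj; simp [hjJ]
      · simp [Finset.mem_sdiff, Finset.mem_compl, Finset.mem_inter,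
          Finset.mem_insert, hkj]
    rw [h1, h2, h3, h4]
    simp
    ring
  -- rewrite the full sum as a sum over subsets of `J`
  have hsum1 : (∑ I : Finset (Fin M),
      (-1 : ℝ) ^ (Iᶜ ∩ Jᶜ).card * c I * ∏ k ∈ J ∩ Iᶜ, ((n k : ℝ) - 1))
      = ∑ S ∈ J.powerset, (c (insert j S) - c S) * ∏ k ∈ J \ S, ((n k : ℝ) - 1) := by
    rw [← Finset.powerset_univ, ← hins, Finset.sum_powerset_insert hjJ,
      ← Finset.sum_add_distrib]
    exact Finset.sum_congr rfl key
  rw [hsum1]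
  -- split off the term `S = J`
  rw [← Finset.add_sum_erase _ _ (Finset.mem_powerset_self J)]
  -- each remaining term has `c (insert j S) - c S = -(n j)/Q`
  have hterm : ∀ S ∈ (J.powerset).erase J,
      (c (insert j S) - c S) * ∏ k ∈ J \ S, ((n k : ℝ) - 1)
      = (-(n j : ℝ) / Q) * ∏ k ∈ J \ S, ((n k : ℝ) - 1) := by
    intro S hS
    have hSJ : S ⊆ J := Finset.mem_powerset.mp (Finset.mem_of_mem_erase hS)
    have hSne : S ≠ J := Finset.ne_of_mem_erase hS
    have hjS : j ∉ S := fun h => hjJ (hSJ h)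
    have hSlt : S.card < J.card := Finset.card_lt_card (hSJ.ssubset_of_ne hSne)
    have hS1 : S ≠ Finset.univ := by
      intro h
      rw [h, Finset.card_univ, Fintype.card_fin] at hSlt
      omega
    have hS2 : insert j S ≠ Finset.univ := by
      intro h
      have := congrArg Finset.card h
      rw [Finset.card_insert_of_notMem hjS, Finset.card_univ, Fintype.card_fin] at this
      omega
    rw [hc S hS1, hc _ hS2, Finset.sum_insert hjS]
    ring
  rw [Finset.sum_congr rfl hterm, ← Finset.mul_sum]
  -- the remaining sum of products
  have hps : ∑ S ∈ J.powerset, ∏ k ∈ J \ S, ((n k : ℝ) - 1) = ∏ k ∈ J, (n k : ℝ) := by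
    have h := Finset.prod_add (fun _ : Fin M => (1 : ℝ)) (fun k => (n k : ℝ) - 1) J
    simp only [Finset.prod_const_one, one_mul] at h
    rw [← h]
    exact Finset.prod_congr rfl fun k _ => by ring
  have hps' : ∑ S ∈ (J.powerset).erase J, ∏ k ∈ J \ S, ((n k : ℝ) - 1)
      = (∏ k ∈ J, (n k : ℝ)) - 1 := by
    have h := Finset.add_sum_erase (J.powerset)
      (fun S => ∏ k ∈ J \ S, ((n k : ℝ) - 1)) (Finset.mem_powerset_self J)
    rw [hps] at h
    simp only [Finset.sdiff_self, Finset.prod_empty] at h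
    linarith
  rw [hps']
  -- evaluate the `S = J` term
  rw [hins, hcuniv, hc J hJne]
  simp only [Finset.sdiff_self, Finset.prod_empty, mul_one]
  -- final algebraic identity
  have hprodU : (∏ i, (n i : ℝ)) = (n j : ℝ) * ∏ k ∈ J, (n k : ℝ) := by
    rw [← hins, Finset.prod_insert hjJ]
  have hsumU : (∑ i, (n i : ℝ)) = (n j : ℝ) + ∑ k ∈ J, (n k : ℝ) := by
    rw [← hins, Finset.sum_insert hjJ]
  rw [hprodU, hsumU] at hQ
  field_simp
  linarith [hQ]
end

section
/- For every integer M ≥ 1 and all real numbers q₁,…,q_M, the following polynomial identity holds: ∏_{i=1}^M (q_i + 1) − ∑_{i=1}^M q_i − 1 + ∑_{I⊊{1,…,M}} (|Iᶜ| − 1 − ∑_{i∈I} q_i) ∏_{j∈Iᶜ} q_j = 0, where the sum ranges over all proper subsets I of {1,…,M}, Iᶜ = {1,…,M} \ I, and the empty product equals 1. -/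
open Finset

/-- **Polynomial identity `X = Q + Y = 0` from Lemma 1 of the paper
(Appendix 2).** For all reals `q₁,…,q_M`,
`∏ (qᵢ+1) − ∑ qᵢ − 1 + ∑_{I⊊{1,…,M}} (|Iᶜ| − 1 − ∑_{i∈I} qᵢ) ∏_{j∈Iᶜ} qⱼ = 0`. -/
theorem poly_identity_Q_plus_Y
    (M : ℕ) (hM : 1 ≤ M) (q : Fin M → ℝ) :
    (∏ i, (q i + 1)) - (∑ i, q i) - 1 +
      ∑ I ∈ (Finset.univ : Finset (Finset (Fin M))).filter
          (fun I => I ≠ Finset.univ),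
        ((Iᶜ.card : ℝ) - 1 - ∑ i ∈ I, q i) * ∏ j ∈ Iᶜ, q j = 0 := by
  classical
  -- reindex the Y-sum by complements: I ↦ Iᶜ = S
  have hY : (∑ I ∈ (Finset.univ : Finset (Finset (Fin M))).filter
          (fun I => I ≠ Finset.univ),
        ((Iᶜ.card : ℝ) - 1 - ∑ i ∈ I, q i) * ∏ j ∈ Iᶜ, q j)
      = ∑ S ∈ (Finset.univ : Finset (Finset (Fin M))).filter (fun S => S ≠ ∅),
        (((S.card : ℝ) - 1 - ∑ i ∈ Sᶜ, q i) * ∏ j ∈ S, q j) := by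
    refine Finset.sum_nbij' (fun I => Iᶜ) (fun S => Sᶜ) ?_ ?_ ?_ ?_ ?_ <;>
      simp [Finset.compl_eq_empty_iff, Finset.compl_eq_univ_iff]
  rw [hY]
  -- expand the product
  have hprod : (∏ i, (q i + 1)) = ∑ S : Finset (Fin M), ∏ j ∈ S, q j := by
    rw [Finset.prod_add]
    simp [Finset.powerset_univ]
  rw [hprod]
  -- split off the empty set
  have hsplit : (∑ S : Finset (Fin M), ∏ j ∈ S, q j)
      = 1 + ∑ S ∈ (Finset.univ : Finset (Finset (Fin M))).filter (fun S => S ≠ ∅),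
          ∏ j ∈ S, q j := by
    rw [← Finset.sum_filter_add_sum_filter_not Finset.univ (fun S => S = ∅)]
    congr 1
    · rw [Finset.filter_eq']
      simp
  rw [hsplit]
  -- expand the coefficient
  have hexp : (∑ S ∈ (Finset.univ : Finset (Finset (Fin M))).filter (fun S => S ≠ ∅),
        (((S.card : ℝ) - 1 - ∑ i ∈ Sᶜ, q i) * ∏ j ∈ S, q j))
      = (∑ S ∈ (Finset.univ : Finset (Finset (Fin M))).filter (fun S => S ≠ ∅),
          ((S.card : ℝ) * ∏ j ∈ S, q j))
        - (∑ S ∈ (Finset.univ : Finset (Finset (Fin M))).filter (fun S => S ≠ ∅),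
            ∏ j ∈ S, q j)
        - (∑ S ∈ (Finset.univ : Finset (Finset (Fin M))).filter (fun S => S ≠ ∅),
            (∑ i ∈ Sᶜ, q i) * ∏ j ∈ S, q j) := by
    rw [← Finset.sum_sub_distrib, ← Finset.sum_sub_distrib]
    apply Finset.sum_congr rfl
    intro S _
    ring
  rw [hexp]
  -- the key combinatorial identity: A = T + C
  have hA : (∑ S ∈ (Finset.univ : Finset (Finset (Fin M))).filter (fun S => S ≠ ∅),
        ((S.card : ℝ) * ∏ j ∈ S, q j))
      = ∑ p ∈ ((Finset.univ : Finset (Finset (Fin M))).filter (fun S => S ≠ ∅)).sigma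
          (fun S => S), ∏ j ∈ p.1, q j := by
    rw [Finset.sum_sigma]
    apply Finset.sum_congr rfl
    intro S _
    simp [Finset.sum_const, nsmul_eq_mul]
  have hC : (∑ S ∈ (Finset.univ : Finset (Finset (Fin M))).filter (fun S => S ≠ ∅),
        (∑ i ∈ Sᶜ, q i) * ∏ j ∈ S, q j)
      = ∑ p ∈ ((Finset.univ : Finset (Finset (Fin M))).filter (fun S => S ≠ ∅)).sigma
          (fun S => Sᶜ), ∏ j ∈ insert p.2 p.1, q j := by
    rw [Finset.sum_sigma]
    apply Finset.sum_congr rfl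
    intro S _
    rw [Finset.sum_mul]
    apply Finset.sum_congr rfl
    intro i hi
    rw [Finset.mem_compl] at hi
    rw [Finset.prod_insert hi]
  have key : (∑ p ∈ ((Finset.univ : Finset (Finset (Fin M))).filter (fun S => S ≠ ∅)).sigma
          (fun S => S), ∏ j ∈ p.1, q j)
      = (∑ i, q i)
        + ∑ p ∈ ((Finset.univ : Finset (Finset (Fin M))).filter (fun S => S ≠ ∅)).sigma
            (fun S => Sᶜ), ∏ j ∈ insert p.2 p.1, q j := by
    rw [← Finset.sum_filter_add_sum_filter_not
      (((Finset.univ : Finset (Finset (Fin M))).filter (fun S => S ≠ ∅)).sigma (fun S => S))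
      (fun p => p.1 = {p.2})]
    congr 1
    · -- diagonal pairs ⟨{i}, i⟩ ↔ i
      refine Finset.sum_nbij' (fun p => p.2)
        (fun i => (⟨{i}, i⟩ : Σ _ : Finset (Fin M), Fin M)) ?_ ?_ ?_ ?_ ?_
      · intro p _; exact Finset.mem_univ _
      · intro i _
        simp [Finset.mem_sigma]
      · rintro ⟨S, i⟩ hp
        simp only [Finset.mem_filter, Finset.mem_sigma] at hp
        obtain ⟨-, h2⟩ := hp
        subst h2
        rfl
      · intro i _; rfl
      · rintro ⟨S, i⟩ hp
        simp only [Finset.mem_filter, Finset.mem_sigma] at hp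
        obtain ⟨-, h2⟩ := hp
        subst h2
        simp
    · -- off-diagonal pairs ↔ (S, i∉S) pairs via erase/insert
      refine Finset.sum_nbij'
        (fun p => (⟨p.1.erase p.2, p.2⟩ : Σ _ : Finset (Fin M), Fin M))
        (fun p => (⟨insert p.2 p.1, p.2⟩ : Σ _ : Finset (Fin M), Fin M)) ?_ ?_ ?_ ?_ ?_
      · rintro ⟨S, i⟩ hp
        simp only [Finset.mem_filter, Finset.mem_sigma, Finset.mem_univ, true_and] at hp
        obtain ⟨⟨hne, hmem⟩, hnsing⟩ := hp
        refine Finset.mem_sigma.mpr ⟨Finset.mem_filter.mpr ⟨Finset.mem_univ _, ?_⟩, ?_⟩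
        · intro h
          apply hnsing
          apply Finset.eq_singleton_iff_unique_mem.mpr
          refine ⟨hmem, fun x hx => ?_⟩
          by_contra hxne
          exact (Finset.notMem_empty x) (h ▸ Finset.mem_erase.mpr ⟨hxne, hx⟩)
        · exact Finset.mem_compl.mpr (Finset.notMem_erase _ _)
      · rintro ⟨S, i⟩ hp
        simp only [Finset.mem_sigma, Finset.mem_filter, Finset.mem_univ, true_and,
          Finset.mem_compl] at hp
        obtain ⟨hne, hnmem⟩ := hp
        refine Finset.mem_filter.mpr ⟨Finset.mem_sigma.mpr ⟨Finset.mem_filter.mpr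
          ⟨Finset.mem_univ _, Finset.insert_ne_empty _ _⟩, Finset.mem_insert_self _ _⟩, ?_⟩
        intro h
        apply hne
        have hsub : S ⊆ {i} := h ▸ Finset.subset_insert _ _
        rcases Finset.subset_singleton_iff.mp hsub with h' | h'
        · exact h'
        · exact absurd (h' ▸ Finset.mem_singleton_self _) hnmem
      · rintro ⟨S, i⟩ hp
        simp only [Finset.mem_filter, Finset.mem_sigma] at hp
        have hmem : i ∈ S := hp.1.2
        show (⟨insert i (S.erase i), i⟩ : Σ _ : Finset (Fin M), Fin M) = ⟨S, i⟩
        rw [Finset.insert_erase hmem]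
      · rintro ⟨S, i⟩ hp
        simp only [Finset.mem_sigma, Finset.mem_filter, Finset.mem_compl] at hp
        have hnmem : i ∉ S := hp.2
        show (⟨(insert i S).erase i, i⟩ : Σ _ : Finset (Fin M), Fin M) = ⟨S, i⟩
        rw [Finset.erase_insert hnmem]
      · rintro ⟨S, i⟩ hp
        simp only [Finset.mem_filter, Finset.mem_sigma] at hp
        show (∏ j ∈ S, q j) = ∏ j ∈ insert i (S.erase i), q j
        rw [Finset.insert_erase hp.1.2]
  rw [hA, hC] at *
  linarith [key]
end

section
/- Let M ≥ 1 be an integer, fix an index j₀ ∈ {1,…,M}, and let q₁,…,q_M be arbitrary real numbers. Then ∑_{I ⊆ {1,…,M}\{j₀}} (|Iᶜ| − 1 − ∑_{i∈I} q_i) ∏_{j∈Iᶜ\{j₀}} q_j = 0, where the sum ranges over all subsets I of {1,…,M}\{j₀}, Iᶜ = {1,…,M} \ I, and the empty product equals 1. -/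
open Finset

lemma aux_Y2 {α : Type*} [DecidableEq α] (q : α → ℝ) (S : Finset α) :
    ∑ I ∈ S.powerset,
      ((S.card : ℝ) - I.card - ∑ i ∈ I, q i) * ∏ j ∈ S \ I, q j = 0 := by
  classical
  induction S using Finset.induction with
  | empty => simp
  | @insert a S ha ih =>
    rw [Finset.sum_powerset_insert ha, ← Finset.sum_add_distrib]
    have key : ∀ I ∈ S.powerset,
        (((insert a S).card : ℝ) - I.card - ∑ i ∈ I, q i) *
            ∏ j ∈ insert a S \ I, q j +
          (((insert a S).card : ℝ) - (insert a I).card - ∑ i ∈ insert a I, q i) *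
            ∏ j ∈ insert a S \ insert a I, q j =
        (q a + 1) * (((S.card : ℝ) - I.card - ∑ i ∈ I, q i) * ∏ j ∈ S \ I, q j) := by
      intro I hI
      rw [Finset.mem_powerset] at hI
      have haI : a ∉ I := fun h => ha (hI h)
      have h1 : insert a S \ I = insert a (S \ I) := by
        ext x; simp only [Finset.mem_sdiff, Finset.mem_insert]
        constructor
        · rintro ⟨h | h, hx⟩ <;> tauto
        · rintro (rfl | ⟨h, hx⟩)
          · exact ⟨Or.inl rfl, haI⟩
          · exact ⟨Or.inr h, hx⟩
      have h2 : insert a S \ insert a I = S \ I := by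
        ext x; simp only [Finset.mem_sdiff, Finset.mem_insert]
        constructor
        · rintro ⟨h | h, hx⟩
          · exact absurd (Or.inl h) hx
          · exact ⟨h, fun hxI => hx (Or.inr hxI)⟩
        · rintro ⟨h, hx⟩
          exact ⟨Or.inr h, by rintro (rfl | h') <;> [exact ha h; exact hx h']⟩
      have haSI : a ∉ S \ I := fun h => ha (Finset.mem_sdiff.mp h).1
      rw [h1, h2, Finset.prod_insert haSI, Finset.sum_insert haI,
        Finset.card_insert_of_notMem ha, Finset.card_insert_of_notMem haI]
      push_cast
      ring
    rw [Finset.sum_congr rfl key, ← Finset.mul_sum, ih, mul_zero]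

/-- **Polynomial identity `Y₂ = 0` from Lemma 1 of the paper (Appendix 2).**
For a fixed index `j₀` and arbitrary reals `q₁,…,q_M`,
`∑_{I ⊆ {1,…,M}\{j₀}} (|Iᶜ| − 1 − ∑_{i∈I} qᵢ) ∏_{j∈Iᶜ\{j₀}} qⱼ = 0`. -/
theorem poly_identity_Y2
    (M : ℕ) (hM : 1 ≤ M) (j₀ : Fin M) (q : Fin M → ℝ) :
    ∑ I ∈ ({j₀}ᶜ : Finset (Fin M)).powerset,
      ((Iᶜ.card : ℝ) - 1 - ∑ i ∈ I, q i) * ∏ j ∈ Iᶜ \ {j₀}, q j = 0 := by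
  classical
  have := aux_Y2 q ({j₀}ᶜ : Finset (Fin M))
  rw [← this]
  apply Finset.sum_congr rfl
  intro I hI
  rw [Finset.mem_powerset] at hI
  have hcompl : Iᶜ \ {j₀} = ({j₀}ᶜ : Finset (Fin M)) \ I := by
    ext x
    simp only [Finset.mem_sdiff, Finset.mem_compl, Finset.mem_singleton]
    tauto
  have hcard : (Iᶜ.card : ℝ) - 1 = (({j₀}ᶜ : Finset (Fin M)).card : ℝ) - I.card := by
    have h1 : Iᶜ.card = M - I.card := by
      rw [Finset.card_compl, Fintype.card_fin]
    have h2 : ({j₀}ᶜ : Finset (Fin M)).card = M - 1 := by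
      rw [Finset.card_compl, Fintype.card_fin, Finset.card_singleton]
    have hIle : I.card ≤ M - 1 := h2 ▸ Finset.card_le_card hI
    rw [h1, h2]
    have hM' : I.card + 1 ≤ M := by omega
    push_cast [Nat.cast_sub (le_trans (Nat.le_add_right _ 1) hM'), Nat.cast_sub hM]
    ring
  rw [hcompl, hcard]
end

section
/- Let M ≥ 2 be an integer, let J ⊆ {1,…,M} satisfy |Jᶜ| ≥ 2, and let r₁,…,r_M be arbitrary real numbers. Then ∑_{I⊊{1,…,M}} (−1)^{|Iᶜ|} (|Iᶜ| − 1 + ∑_{i∈I} r_i) ∏_{j∈Iᶜ∩J} r_j = 1 − ∑_{i=1}^M r_i, where the sum ranges over all proper subsets I of {1,…,M}, Iᶜ = {1,…,M} \ I, and the empty product equals 1. -/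
open Finset

/-- **Identity `X₃ = 1 − ∑ rᵢ` from Lemma 1 of the paper (Appendix 2).**
For `J ⊆ {1,…,M}` with `|Jᶜ| ≥ 2` and arbitrary reals `r₁,…,r_M`,
`∑_{I⊊{1,…,M}} (−1)^{|Iᶜ|} (|Iᶜ| − 1 + ∑_{i∈I} rᵢ) ∏_{j∈Iᶜ∩J} rⱼ = 1 − ∑ rᵢ`. -/
theorem poly_identity_X3
    (M : ℕ) (hM : 2 ≤ M) (J : Finset (Fin M)) (hJ : 2 ≤ Jᶜ.card)
    (r : Fin M → ℝ) :
    ∑ I ∈ (Finset.univ : Finset (Finset (Fin M))).filter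
        (fun I => I ≠ Finset.univ),
      (-1 : ℝ) ^ Iᶜ.card * ((Iᶜ.card : ℝ) - 1 + ∑ i ∈ I, r i) *
        ∏ j ∈ Iᶜ ∩ J, r j
      = 1 - ∑ i, r i := by
  set F : Finset (Fin M) → ℝ := fun I =>
    (-1 : ℝ) ^ Iᶜ.card * ((Iᶜ.card : ℝ) - 1 + ∑ i ∈ I, r i) * ∏ j ∈ Iᶜ ∩ J, r j with hF
  obtain ⟨j₀, hj₀, j₁, hj₁, hne⟩ := Finset.one_lt_card.mp hJ
  have hj₀J : j₀ ∉ J := Finset.mem_compl.mp hj₀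
  have hj₁J : j₁ ∉ J := Finset.mem_compl.mp hj₁
  set s : Finset (Fin M) := (Finset.univ.erase j₀).erase j₁ with hs
  have hj₁s : j₁ ∉ s := Finset.notMem_erase _ _
  have hj₀s1 : j₀ ∉ insert j₁ s := by
    simp [hs, Finset.mem_insert, Finset.mem_erase, hne, Ne.symm hne]
  have huniv : insert j₀ (insert j₁ s) = Finset.univ := by
    ext x
    simp only [hs, Finset.mem_insert, Finset.mem_erase, Finset.mem_univ, iff_true]
    by_cases h0 : x = j₀
    · exact Or.inl h0
    · by_cases h1 : x = j₁
      · exact Or.inr (Or.inl h1)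
      · exact Or.inr (Or.inr ⟨h1, h0, trivial⟩)
  -- the sum over all subsets vanishes
  have htotal : ∑ I ∈ (Finset.univ : Finset (Finset (Fin M))), F I = 0 := by
    rw [← Finset.powerset_univ, ← huniv,
        Finset.sum_powerset_insert hj₀s1,
        Finset.sum_powerset_insert hj₁s,
        Finset.sum_powerset_insert hj₁s]
    rw [add_add_add_comm, ← Finset.sum_add_distrib, ← Finset.sum_add_distrib,
        ← Finset.sum_add_distrib]
    apply Finset.sum_eq_zero
    intro K hK
    have hKs : K ⊆ s := Finset.mem_powerset.mp hK
    have hj₀K : j₀ ∉ K := fun h => hj₀s1 (Finset.mem_insert_of_mem (hKs h))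
    have hj₁K : j₁ ∉ K := fun h => hj₁s (hKs h)
    have hj₀Kc : j₀ ∈ Kᶜ := Finset.mem_compl.mpr hj₀K
    have hj₁Kc : j₁ ∈ Kᶜ := Finset.mem_compl.mpr hj₁K
    have hj₀e : j₀ ∈ Kᶜ.erase j₁ := Finset.mem_erase.mpr ⟨hne, hj₀Kc⟩
    -- cardinalities
    have hc2 : 2 ≤ Kᶜ.card := by
      have : ({j₀, j₁} : Finset (Fin M)) ⊆ Kᶜ := by
        intro x hx
        rcases Finset.mem_insert.mp hx with h | h
        · exact h ▸ hj₀Kc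
        · exact (Finset.mem_singleton.mp h) ▸ hj₁Kc
      calc 2 = ({j₀, j₁} : Finset (Fin M)).card := (Finset.card_pair hne).symm
        _ ≤ Kᶜ.card := Finset.card_le_card this
    obtain ⟨d, hd⟩ : ∃ d, Kᶜ.card = d + 2 := ⟨Kᶜ.card - 2, by omega⟩
    -- complements
    have hcomp0 : (insert j₀ K)ᶜ = Kᶜ.erase j₀ := Finset.compl_insert
    have hcomp1 : (insert j₁ K)ᶜ = Kᶜ.erase j₁ := Finset.compl_insert
    have hcomp01 : (insert j₀ (insert j₁ K))ᶜ = (Kᶜ.erase j₁).erase j₀ := by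
      rw [Finset.compl_insert, Finset.compl_insert]
    -- cards of erased sets
    have hcard0 : (Kᶜ.erase j₀).card = d + 1 := by
      rw [Finset.card_erase_of_mem hj₀Kc, hd]; omega
    have hcard1 : (Kᶜ.erase j₁).card = d + 1 := by
      rw [Finset.card_erase_of_mem hj₁Kc, hd]; omega
    have hcard01 : ((Kᶜ.erase j₁).erase j₀).card = d := by
      rw [Finset.card_erase_of_mem hj₀e, hcard1]; omega
    -- intersections with J are unchanged
    have hi0 : Kᶜ.erase j₀ ∩ J = Kᶜ ∩ J := by
      ext x
      simp only [Finset.mem_inter, Finset.mem_erase]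
      constructor
      · rintro ⟨⟨-, h⟩, hJ'⟩; exact ⟨h, hJ'⟩
      · rintro ⟨h, hJ'⟩
        exact ⟨⟨fun e => hj₀J (e ▸ hJ'), h⟩, hJ'⟩
    have hi1 : Kᶜ.erase j₁ ∩ J = Kᶜ ∩ J := by
      ext x
      simp only [Finset.mem_inter, Finset.mem_erase]
      constructor
      · rintro ⟨⟨-, h⟩, hJ'⟩; exact ⟨h, hJ'⟩
      · rintro ⟨h, hJ'⟩
        exact ⟨⟨fun e => hj₁J (e ▸ hJ'), h⟩, hJ'⟩
    have hi01 : (Kᶜ.erase j₁).erase j₀ ∩ J = Kᶜ ∩ J := by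
      ext x
      simp only [Finset.mem_inter, Finset.mem_erase]
      constructor
      · rintro ⟨⟨-, -, h⟩, hJ'⟩; exact ⟨h, hJ'⟩
      · rintro ⟨h, hJ'⟩
        exact ⟨⟨fun e => hj₀J (e ▸ hJ'), fun e => hj₁J (e ▸ hJ'), h⟩, hJ'⟩
    -- sums
    have hsum1 : ∑ i ∈ insert j₁ K, r i = r j₁ + ∑ i ∈ K, r i :=
      Finset.sum_insert hj₁K
    have hsum0 : ∑ i ∈ insert j₀ K, r i = r j₀ + ∑ i ∈ K, r i :=
      Finset.sum_insert hj₀K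
    have hj₀K1 : j₀ ∉ insert j₁ K := by
      simp only [Finset.mem_insert]
      rintro (h | h)
      · exact hne h
      · exact hj₀K h
    have hsum01 : ∑ i ∈ insert j₀ (insert j₁ K), r i
        = r j₀ + (r j₁ + ∑ i ∈ K, r i) := by
      rw [Finset.sum_insert hj₀K1, hsum1]
    simp only [hF, hcomp0, hcomp1, hcomp01, hcard0, hcard1, hcard01, hd,
      hi0, hi1, hi01, hsum0, hsum1, hsum01]
    push_cast
    ring
  -- now remove the I = univ term
  have hfil : (Finset.univ : Finset (Finset (Fin M))).filter (fun I => I ≠ Finset.univ)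
      = (Finset.univ : Finset (Finset (Fin M))).erase Finset.univ :=
    Finset.filter_ne' _ _
  have hFuniv : F Finset.univ = (∑ i, r i) - 1 := by
    simp [hF, Finset.compl_univ]; ring
  have := Finset.sum_erase_add (Finset.univ : Finset (Finset (Fin M))) F
      (Finset.mem_univ Finset.univ)
  rw [htotal] at this
  calc ∑ I ∈ (Finset.univ : Finset (Finset (Fin M))).filter (fun I => I ≠ Finset.univ), F I
      = ∑ I ∈ (Finset.univ : Finset (Finset (Fin M))).erase Finset.univ, F I := by rw [hfil]
    _ = -F Finset.univ := by linarith
    _ = 1 - ∑ i, r i := by rw [hFuniv]; ring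
end

section
/- Let M ≥ 2 and n₁,…,n_M ≥ 2 be integers, Q = ∏_{i=1}^M n_i − ∑_{i=1}^M n_i + M − 1, and let c_I = (M − 1 − ∑_{i∈I} n_i)/Q for proper subsets I ⊊ {1,…,M} with c_{{1,…,M}} = 1. Then for every j ∈ {1,…,M}: (i) ∑_{I⊆{1,…,M}, j∈I} c_I ∏_{i∈Iᶜ} (n_i − 1) = 0, and (ii) ∑_{I⊆{1,…,M}, j∉I} c_I ∏_{i∈Iᶜ\{j}} (n_i − 1) = 0, where Iᶜ = {1,…,M} \ I and empty products equal 1. -/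
/-!
Put `T = univ \ {j}`. Both sums reindex over `J ⊆ T` (as `I = insert j J` in (i), `I = J` in (ii)),
and off `I = univ` the summands are affine in `∑_{i ∈ J} n_i`; by induction on `T`,
`∑_{J ⊆ T} (a - ∑_{i ∈ J} x_i) ∏_{k ∈ T \ J} (x_k - 1) = (a - |T|) ∏_{k ∈ T} x_k`.
In (ii) `a = M - 1 = |T|`, so the sum vanishes. In (i) `a = M - 1 - n_j`, and replacing the
formula value `(M - 1 - ∑ n)/Q` at `I = univ` by `c_univ = 1` restores zero precisely because
`Q = ∏ n - ∑ n + M - 1`; this needs `Q ≠ 0`, and indeed `Q > 0` once `M ≥ 2` and all `n_i ≥ 2`.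
-/

open Finset

section Order

variable {ι R : Type*} [CommRing R] [LinearOrder R] [IsStrictOrderedRing R] {x : ι → R}

theorem Finset.sum_le_prod_add_card_sub_one (s : Finset ι) (hx : ∀ i ∈ s, 1 ≤ x i) :
    ∑ i ∈ s, x i ≤ ∏ i ∈ s, x i + s.card - 1 := by
  classical
  induction s using Finset.induction_on with
  | empty => simp
  | insert a t ha ih =>
    have hxt : ∀ i ∈ t, 1 ≤ x i := fun i hi => hx i (mem_insert_of_mem hi)
    have hxa : 1 ≤ x a := hx a (mem_insert_self a t)
    have hprod : 1 ≤ ∏ i ∈ t, x i := Finset.one_le_prod hxt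
    have iht := ih hxt
    rw [sum_insert ha, prod_insert ha, card_insert_of_notMem ha]
    push_cast
    nlinarith

theorem Finset.sum_lt_prod_add_card_sub_one {s : Finset ι} (hs : 2 ≤ s.card)
    (hx : ∀ i ∈ s, 2 ≤ x i) : ∑ i ∈ s, x i < ∏ i ∈ s, x i + s.card - 1 := by
  classical
  obtain ⟨a, ha⟩ : s.Nonempty := card_pos.mp (by omega)
  set t := s.erase a
  have hxt : ∀ i ∈ t, 2 ≤ x i := fun i hi => hx i (mem_of_mem_erase hi)
  have hcard : 1 ≤ t.card := by rw [card_erase_of_mem ha]; omega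
  have hweak := t.sum_le_prod_add_card_sub_one fun i hi => one_le_two.trans (hxt i hi)
  have hsum : t.card • (2 : R) ≤ ∑ i ∈ t, x i := card_nsmul_le_sum t x 2 hxt
  have hprod : 2 ≤ ∏ i ∈ t, x i := by
    rw [nsmul_eq_mul] at hsum
    have : (1 : R) ≤ t.card := by exact_mod_cast hcard
    linarith
  rw [← insert_erase ha, sum_insert (notMem_erase a s), prod_insert (notMem_erase a s),
    card_insert_of_notMem (notMem_erase a s)]
  push_cast
  nlinarith [hx a ha]

end Order

theorem Finset.sum_powerset_sub_sum_mul_prod_sdiff {ι R : Type*} [CommRing R] [DecidableEq ι]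
    (T : Finset ι) (x : ι → R) (a : R) :
    ∑ I ∈ T.powerset, (a - ∑ i ∈ I, x i) * ∏ k ∈ T \ I, (x k - 1)
      = (a - T.card) * ∏ k ∈ T, x k := by
  induction T using Finset.induction_on generalizing a with
  | empty => simp
  | insert b T hb ih =>
    have hsub : ∀ I ∈ T.powerset, b ∉ I := fun I hI hbI => hb (mem_powerset.mp hI hbI)
    have hout : ∑ I ∈ T.powerset, (a - ∑ i ∈ I, x i) * ∏ k ∈ insert b T \ I, (x k - 1)
        = (x b - 1) * ((a - T.card) * ∏ k ∈ T, x k) := by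
      rw [← ih, mul_sum]
      refine sum_congr rfl fun I hI => ?_
      rw [insert_sdiff_of_notMem _ (hsub I hI), prod_insert (by simp [hb])]
      ring
    have hin : ∑ I ∈ T.powerset,
          (a - ∑ i ∈ insert b I, x i) * ∏ k ∈ insert b T \ insert b I, (x k - 1)
        = (a - x b - T.card) * ∏ k ∈ T, x k := by
      rw [← ih]
      refine sum_congr rfl fun I hI => ?_
      rw [sum_insert (hsub I hI), insert_sdiff_insert, sdiff_insert_of_notMem hb]
      ring
    rw [sum_powerset_insert hb, hout, hin, card_insert_of_notMem hb, prod_insert hb]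
    push_cast
    ring

section UnivErase

variable {ι M : Type*} [Fintype ι] [DecidableEq ι] [AddCommMonoid M]

theorem Finset.sum_filter_notMem_eq_sum_powerset_erase (j : ι) (f : Finset ι → M) :
    ∑ I ∈ univ.filter (j ∉ ·), f I = ∑ J ∈ (univ.erase j).powerset, f J := by
  congr 1
  ext I
  simp [subset_erase]

theorem Finset.sum_filter_mem_eq_sum_powerset_erase (j : ι) (f : Finset ι → M) :
    ∑ I ∈ univ.filter (j ∈ ·), f I = ∑ J ∈ (univ.erase j).powerset, f (insert j J) := by
  refine sum_nbij' (fun I => I.erase j) (insert j) ?_ ?_ ?_ ?_ ?_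
  all_goals intro I hI
  all_goals simp_all [subset_erase]

theorem Finset.cast_card_univ_erase {R : Type*} [AddGroupWithOne R] (j : ι) :
    ((univ.erase j).card : R) = Fintype.card ι - 1 := by
  rw [card_erase_of_mem (mem_univ j), card_univ, Nat.cast_pred (Fintype.card_pos_iff.mpr ⟨j⟩)]

end UnivErase

section EqualPrevalence

variable {ι K : Type*} [Fintype ι] [DecidableEq ι] [Field K] {x : ι → K} {Q : K}
  {c : Finset ι → K}

theorem sum_filter_notMem_mul_prod_compl_sdiff_eq_zero
    (hc : ∀ I, I ≠ univ → c I = ((Fintype.card ι : K) - 1 - ∑ i ∈ I, x i) / Q) (j : ι) :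
    ∑ I ∈ univ.filter (j ∉ ·), c I * ∏ i ∈ Iᶜ \ {j}, (x i - 1) = 0 := by
  have hterm : ∀ J ∈ (univ.erase j).powerset, c J * ∏ i ∈ Jᶜ \ {j}, (x i - 1)
      = (((Fintype.card ι : K) - 1 - ∑ i ∈ J, x i) * ∏ i ∈ univ.erase j \ J, (x i - 1)) / Q := by
    intro J hJ
    have hjJ : j ∉ J := fun h => by simpa using mem_powerset.mp hJ h
    have hcompl : Jᶜ \ {j} = univ.erase j \ J := by
      ext i
      simp only [mem_sdiff, mem_compl, mem_singleton, mem_erase, mem_univ, and_true]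
      tauto
    rw [hc J fun h => hjJ (h ▸ mem_univ j), hcompl, div_mul_eq_mul_div]
  rw [sum_filter_notMem_eq_sum_powerset_erase, sum_congr rfl hterm, ← sum_div,
    sum_powerset_sub_sum_mul_prod_sdiff, cast_card_univ_erase, sub_self, zero_mul, zero_div]

theorem sum_filter_mem_mul_prod_compl_eq_zero
    (hQ : Q = ∏ i, x i - ∑ i, x i + Fintype.card ι - 1) (hQ0 : Q ≠ 0)
    (hc : ∀ I, I ≠ univ → c I = ((Fintype.card ι : K) - 1 - ∑ i ∈ I, x i) / Q)
    (hcuniv : c univ = 1) (j : ι) :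
    ∑ I ∈ univ.filter (j ∈ ·), c I * ∏ i ∈ Iᶜ, (x i - 1) = 0 := by
  set T := univ.erase j
  set g : Finset ι → K := fun J => ((Fintype.card ι : K) - 1 - ∑ i ∈ insert j J, x i) / Q
  have hT : T ∈ T.powerset := mem_powerset_self T
  have hjT : insert j T = univ := insert_erase (mem_univ j)
  have hj : ∀ J ∈ T.powerset, j ∉ J := fun J hJ h => by simpa [T] using mem_powerset.mp hJ h
  have hcompl : ∀ J ∈ T.powerset, (insert j J)ᶜ = T \ J := by
    intro J _
    ext i
    simp only [mem_compl, mem_insert, mem_sdiff, mem_erase, mem_univ, and_true, T]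
    tauto
  have hoff : ∀ J ∈ T.powerset.erase T,
      c (insert j J) * ∏ i ∈ T \ J, (x i - 1) = g J * ∏ i ∈ T \ J, (x i - 1) := by
    intro J hJ
    have hJT : insert j J ≠ univ := fun h =>
      ne_of_mem_erase hJ (by rw [← erase_insert (hj J (mem_of_mem_erase hJ)), h])
    rw [hc _ hJT]
  have hsum : ∑ J ∈ T.powerset, g J * ∏ i ∈ T \ J, (x i - 1) = -(x j * ∏ i ∈ T, x i) / Q := by
    have hterm : ∀ J ∈ T.powerset, g J * ∏ i ∈ T \ J, (x i - 1)
        = (((Fintype.card ι - 1 - x j) - ∑ i ∈ J, x i) * ∏ i ∈ T \ J, (x i - 1)) / Q := by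
      intro J hJ
      rw [div_mul_eq_mul_div, sum_insert (hj J hJ), sub_add_eq_sub_sub]
    rw [sum_congr rfl hterm, ← sum_div, sum_powerset_sub_sum_mul_prod_sdiff,
      cast_card_univ_erase]
    ring
  have hgT : g T + x j * (∏ i ∈ T, x i) / Q = 1 := by
    simp only [g, hjT]
    rw [← add_div, div_eq_one_iff_eq hQ0, hQ, ← mul_prod_erase univ x (mem_univ j)]
    ring
  rw [← add_sum_erase _ _ hT, Finset.sdiff_self, prod_empty] at hsum
  rw [sum_filter_mem_eq_sum_powerset_erase, sum_congr rfl fun J hJ => by rw [hcompl J hJ],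
    ← add_sum_erase _ _ hT, sum_congr rfl hoff, hjT, hcuniv, Finset.sdiff_self, prod_empty]
  linear_combination hsum - hgT

end EqualPrevalence

/-- **The paper's Statement: formula (35) solves the linear system (32)–(33).**
For the equal-prevalence correlation family and every factor `j`:
(i) `∑_{I∋j} c_I ∏_{i∈Iᶜ}(n_i − 1) = 0` and
(ii) `∑_{I∌j} c_I ∏_{i∈Iᶜ\{j}}(n_i − 1) = 0`. -/
theorem equal_prevalence_satisfies_marginal_system
    (M : ℕ) (hM : 2 ≤ M) (n : Fin M → ℕ) (hn : ∀ j, 2 ≤ n j)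
    (Q : ℝ) (hQ : Q = (∏ i, (n i : ℝ)) - (∑ i, (n i : ℝ)) + M - 1)
    (c : Finset (Fin M) → ℝ)
    (hc : ∀ I : Finset (Fin M), I ≠ Finset.univ →
      c I = ((M : ℝ) - 1 - ∑ i ∈ I, (n i : ℝ)) / Q)
    (hcuniv : c Finset.univ = 1) :
    ∀ j : Fin M,
      (∑ I ∈ (Finset.univ : Finset (Finset (Fin M))).filter (fun I => j ∈ I),
        c I * ∏ i ∈ Iᶜ, ((n i : ℝ) - 1)) = 0 ∧
      (∑ I ∈ (Finset.univ : Finset (Finset (Fin M))).filter (fun I => j ∉ I),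
        c I * ∏ i ∈ Iᶜ \ {j}, ((n i : ℝ) - 1)) = 0 := by
  intro j
  have hcard : (Fintype.card (Fin M) : ℝ) = M := by rw [Fintype.card_fin]
  rw [← hcard] at hQ hc
  have hQpos : 0 < Q := by
    have := sum_lt_prod_add_card_sub_one (s := univ) (x := fun i => (n i : ℝ))
      (by simpa using hM) fun i _ => by exact_mod_cast hn i
    rw [card_univ] at this
    linarith
  exact ⟨sum_filter_mem_mul_prod_compl_eq_zero hQ hQpos.ne' hc hcuniv j,
    sum_filter_notMem_mul_prod_compl_sdiff_eq_zero hc j⟩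
end
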